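/- arXiv:2509.25901 — 8 statements merged into one kernel-verified Lean document; each statement's English description precedes it below -/
import Mathlib

section
/- Let q > 3 be a power of 2 and L = PSL(2,q). Let X be the set of involutions of L, and let C(L,X) be the graph on X where distinct x,y are adjacent iff xy = yx. Then C(L,X) has q+1 connected components, each of which is a complete graph on q-1 vertices. -/
open Matrix
open scoped MatrixGroups

/-!
In characteristic 2 every involution of `SL(2, F) ≅ PSL(2, F)` is a transvection `1 + c • N`,
where `N` is a nonzero square-zero matrix, determined by its kernel, a point `p` of the
projective line `P¹(F)`, together with the scalar `c ∈ Fˣ`. Two such involutions commute exactly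
when their nilpotent parts commute, i.e. when they share the point `p`. So the commuting
involution graph is the disjoint union, over the `q + 1` points of `P¹(F)`, of complete graphs on
`|Fˣ| = q - 1` vertices.
-/

/-- The commuting involution graph of a group, on the set of all involutions. -/
def commGraph (G : Type*) [Group G] : SimpleGraph {x : G // x * x = 1 ∧ x ≠ 1} where
  Adj x y := x ≠ y ∧ (x : G) * y = (y : G) * x
  symm := ⟨fun x y h => ⟨h.1.symm, h.2.symm⟩⟩
  loopless := ⟨fun x h => h.1 rfl⟩

namespace SimpleGraph

variable {V I : Type*} {G : SimpleGraph V} {κ : V → I}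

theorem reachable_iff_of_adj_iff (hG : ∀ x y, G.Adj x y ↔ x ≠ y ∧ κ x = κ y) {x y : V} :
    G.Reachable x y ↔ κ x = κ y := by
  refine ⟨?_, fun h => ?_⟩
  · rintro ⟨w⟩
    induction w with
    | nil => rfl
    | cons hadj _ ih => exact ((hG _ _).1 hadj).2.trans ih
  · rcases eq_or_ne x y with rfl | hne
    · rfl
    · exact ((hG x y).2 ⟨hne, h⟩).reachable

noncomputable def connectedComponentEquivOfAdjIff
    (hG : ∀ x y, G.Adj x y ↔ x ≠ y ∧ κ x = κ y) (hκ : Function.Surjective κ) :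
    G.ConnectedComponent ≃ I :=
  (Quot.congrRight fun _ _ => reachable_iff_of_adj_iff hG).trans
    (Setoid.quotientKerEquivOfSurjective κ hκ)

def suppEquivOfAdjIff (hG : ∀ x y, G.Adj x y ↔ x ≠ y ∧ κ x = κ y) (v : V) :
    (G.connectedComponentMk v).supp ≃ {w // κ w = κ v} :=
  Equiv.subtypeEquivRight fun w => by
    rw [ConnectedComponent.mem_supp_iff, ConnectedComponent.eq, reachable_iff_of_adj_iff hG]

end SimpleGraph

theorem MulEquiv.commute_map_iff {G H : Type*} [Group G] [Group H] (e : G ≃* H) {a b : G} :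
    Commute (e a) (e b) ↔ Commute a b :=
  ⟨fun h => by simpa using h.map e.symm, fun h => h.map e⟩

def involutionsCongr {G H : Type*} [Group G] [Group H] (e : G ≃* H) :
    {x : G // x * x = 1 ∧ x ≠ 1} ≃ {x : H // x * x = 1 ∧ x ≠ 1} :=
  e.toEquiv.subtypeEquiv fun x => by
    change _ ↔ e x * e x = 1 ∧ e x ≠ 1
    simp only [← map_mul, MulEquiv.map_eq_one_iff, ne_eq]

theorem commGraph_structure_of_equiv_prod {G I J : Type*} [Group G] [Nonempty J]
    (f : I × J ≃ {x : G // x * x = 1 ∧ x ≠ 1})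
    (hf : ∀ p p', Commute (f p : G) (f p') ↔ p.1 = p'.1) :
    Nat.card (commGraph G).ConnectedComponent = Nat.card I ∧
    (∀ c : (commGraph G).ConnectedComponent, Nat.card c.supp = Nat.card J) ∧
    (∀ x y, (commGraph G).Reachable x y → x ≠ y → (commGraph G).Adj x y) := by
  have hadj : ∀ x y, (commGraph G).Adj x y ↔ x ≠ y ∧ (f.symm x).1 = (f.symm y).1 := fun x y => by
    rw [← hf, f.apply_symm_apply, f.apply_symm_apply]
    rfl
  refine ⟨?_, fun c => ?_, fun x y hxy hne => (hadj x y).2 ⟨hne, ?_⟩⟩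
  · obtain ⟨j⟩ := ‹Nonempty J›
    exact Nat.card_congr <| SimpleGraph.connectedComponentEquivOfAdjIff hadj
      fun i => ⟨f (i, j), by simp⟩
  · induction c using SimpleGraph.ConnectedComponent.ind with | h v => ?_
    rw [Nat.card_congr ((SimpleGraph.suppEquivOfAdjIff hadj v).trans
      ((f.symm.subtypeEquiv fun _ => Iff.rfl).trans
        (Equiv.prodSubtypeFstEquivSubtypeProd (p := (· = (f.symm v).1))))),
      Nat.card_prod, Nat.card_unique, one_mul]
  · exact (SimpleGraph.reachable_iff_of_adj_iff hadj).1 hxy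

theorem Commute.one_add_left_iff {R : Type*} [Ring R] {a b : R} :
    Commute (1 + a) b ↔ Commute a b :=
  ⟨fun h => by simpa using h.sub_left (Commute.one_left b), (Commute.one_left b).add_left⟩

theorem Commute.one_add_right_iff {R : Type*} [Ring R] {a b : R} :
    Commute a (1 + b) ↔ Commute a b := by
  rw [Commute.symm_iff, Commute.one_add_left_iff, Commute.symm_iff]

theorem commute_one_add_smul_iff {K A : Type*} [Field K] [Ring A] [Algebra K A] {b c : K}
    (hb : b ≠ 0) (hc : c ≠ 0) {x y : A} :
    Commute (1 + b • x) (1 + c • y) ↔ Commute x y := by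
  rw [Commute.one_add_left_iff, Commute.one_add_right_iff, Commute.smul_left_iff₀ hb,
    Commute.smul_right_iff₀ hc]

namespace Matrix

variable {F : Type*} [Field F]

/-- A point of `P¹(F)` is encoded as `none = [1 : 0]` or `some s = [s : 1]`; in characteristic 2
this matrix squares to zero and its kernel is that point. -/
def nilpotentOfPoint : Option F → Matrix (Fin 2) (Fin 2) F
  | none => !![0, 1; 0, 0]
  | some s => !![s, s ^ 2; 1, s]

theorem nilpotentOfPoint_ne_zero (p : Option F) : nilpotentOfPoint p ≠ 0 := by
  cases p <;> simp [nilpotentOfPoint, ← Matrix.ext_iff, Fin.forall_fin_two]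

variable [CharP F 2]

theorem nilpotentOfPoint_mul_self (p : Option F) :
    nilpotentOfPoint p * nilpotentOfPoint p = 0 := by
  ext i j
  cases p <;> fin_cases i <;> fin_cases j <;>
    simp [nilpotentOfPoint, mul_apply, ← sq, ← pow_succ', ← pow_succ, CharTwo.add_self_eq_zero]

theorem commute_nilpotentOfPoint_iff {p p' : Option F} :
    Commute (nilpotentOfPoint p) (nilpotentOfPoint p') ↔ p = p' := by
  refine ⟨fun h => ?_, fun h => h ▸ Commute.refl _⟩
  have h00 := congrFun (congrFun h 0) 0
  cases p <;> cases p' <;>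
    simp only [nilpotentOfPoint, mul_fin_two, of_apply, cons_val', cons_val_zero, cons_val_fin_one,
      mul_zero, mul_one, zero_mul, one_mul, add_zero, zero_add, zero_ne_one, one_ne_zero,
      Option.some.injEq] at h00 ⊢
  exact CharTwo.sq_inj.mp (by linear_combination h00)

theorem det_one_add_smul_nilpotentOfPoint (c : F) (p : Option F) :
    (1 + c • nilpotentOfPoint p).det = 1 := by
  cases p with
  | none => simp [nilpotentOfPoint, det_fin_two]
  | some s =>
    simp only [nilpotentOfPoint, one_fin_two, smul_of, smul_cons, smul_eq_mul, smul_empty,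
      of_add_of, add_cons, head_cons, tail_cons, empty_add_empty, det_fin_two_of, mul_one, zero_add]
    linear_combination (c * s) * CharTwo.two_eq_zero (R := F)

theorem one_add_smul_nilpotentOfPoint_mul_self (c : F) (p : Option F) :
    (1 + c • nilpotentOfPoint p) * (1 + c • nilpotentOfPoint p) = 1 := by
  simp only [add_mul, mul_add, one_mul, mul_one, smul_mul_smul_comm, nilpotentOfPoint_mul_self,
    smul_zero, add_zero, add_assoc, CharTwo.add_self_eq_zero]

def sl2Involution (p : Option F) (c : Fˣ) : SL(2, F) :=
  ⟨1 + (c : F) • nilpotentOfPoint p, det_one_add_smul_nilpotentOfPoint _ _⟩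

theorem sl2Involution_mul_self (p : Option F) (c : Fˣ) :
    sl2Involution p c * sl2Involution p c = 1 :=
  Subtype.ext (one_add_smul_nilpotentOfPoint_mul_self _ _)

theorem sl2Involution_ne_one (p : Option F) (c : Fˣ) : sl2Involution p c ≠ 1 := by
  intro h
  have := congrArg Subtype.val h
  simp [sl2Involution, nilpotentOfPoint_ne_zero] at this

theorem coe_sl2Involution_none (c : Fˣ) :
    (sl2Involution none c : Matrix (Fin 2) (Fin 2) F) = !![1, (c : F); 0, 1] := by
  ext i j
  fin_cases i <;> fin_cases j <;> simp [sl2Involution, nilpotentOfPoint]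

theorem coe_sl2Involution_some (s : F) (c : Fˣ) :
    (sl2Involution (some s) c : Matrix (Fin 2) (Fin 2) F) =
      !![1 + c * s, c * s ^ 2; (c : F), 1 + c * s] := by
  ext i j
  fin_cases i <;> fin_cases j <;> simp [sl2Involution, nilpotentOfPoint]

theorem commute_sl2Involution_iff {p p' : Option F} {b c : Fˣ} :
    Commute (sl2Involution p b) (sl2Involution p' c) ↔ p = p' := by
  rw [← commute_nilpotentOfPoint_iff, ← commute_one_add_smul_iff b.ne_zero c.ne_zero]
  exact Subtype.ext_iff

theorem sl2Involution_injective :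
    Function.Injective (Function.uncurry (sl2Involution (F := F))) := by
  rintro ⟨p, b⟩ ⟨p', c⟩ h
  have h' : (b : F) • nilpotentOfPoint p = (c : F) • nilpotentOfPoint p' :=
    add_left_cancel (congrArg Subtype.val h)
  have e00 := congrFun (congrFun h' 0) 0
  have e01 := congrFun (congrFun h' 0) 1
  have e10 := congrFun (congrFun h' 1) 0
  cases p <;> cases p' <;>
    simp only [nilpotentOfPoint, smul_apply, smul_eq_mul, of_apply, cons_val', cons_val_zero,
      cons_val_one, cons_val_fin_one, mul_zero, mul_one] at e00 e01 e10
  case none.none => rw [Units.ext e01]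
  case none.some => exact absurd e10.symm c.ne_zero
  case some.none => exact absurd e10 b.ne_zero
  case some.some =>
    obtain rfl := Units.ext e10
    rw [mul_left_cancel₀ b.ne_zero e00]

theorem exists_sl2Involution_eq {A : SL(2, F)} (hA : A * A = 1) (hA1 : A ≠ 1) :
    ∃ p c, sl2Involution p c = A := by
  induction A using SpecialLinearGroup.fin_two_induction with
  | h a b c d hdet => ?_
  have hd : d = a := by
    have hm : !![a, b; c, d] * !![a, b; c, d] = 1 := congrArg Subtype.val hA
    have h00 := congrFun (congrFun hm 0) 0
    have h11 := congrFun (congrFun hm 1) 1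
    simp only [mul_fin_two, of_apply, cons_val', cons_val_zero, cons_val_one, cons_val_fin_one,
      one_apply_eq] at h00 h11
    exact CharTwo.sq_inj.mp (by linear_combination h11 - h00)
  subst hd
  have hbc : b * c = (d + 1) ^ 2 := by
    linear_combination -hdet - (d + 1) * CharTwo.two_eq_zero (R := F)
  by_cases hc : c = 0
  · subst hc
    have hd1 : d + 1 = 0 := pow_eq_zero_iff two_ne_zero |>.mp (by simpa using hbc.symm)
    rw [← CharTwo.neg_eq d, neg_add_eq_zero] at hd1
    subst hd1
    have hb : b ≠ 0 := by
      rintro rfl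
      exact hA1 (Subtype.ext one_fin_two.symm)
    exact ⟨none, Units.mk0 b hb, Subtype.ext (coe_sl2Involution_none _)⟩
  · have h00 : 1 + c * ((d + 1) / c) = d := by
      rw [mul_div_cancel₀ _ hc]
      linear_combination CharTwo.two_eq_zero (R := F)
    have h01 : c * ((d + 1) / c) ^ 2 = b := by
      field_simp
      linear_combination -hbc
    refine ⟨some ((d + 1) / c), Units.mk0 c hc, Subtype.ext ?_⟩
    rw [coe_sl2Involution_some, Units.val_mk0, h00, h01]

noncomputable def sl2InvolutionEquiv : Option F × Fˣ ≃ {A : SL(2, F) // A * A = 1 ∧ A ≠ 1} :=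
  Equiv.ofBijective
    (fun pc => ⟨sl2Involution pc.1 pc.2, sl2Involution_mul_self _ _, sl2Involution_ne_one _ _⟩)
    ⟨fun _ _ h => sl2Involution_injective (congrArg Subtype.val h), fun A =>
      let ⟨p, c, h⟩ := exists_sl2Involution_eq A.2.1 A.2.2
      ⟨(p, c), Subtype.ext h⟩⟩

theorem SpecialLinearGroup.center_eq_bot_of_charTwo : Subgroup.center SL(2, F) = ⊥ := by
  refine eq_bot_iff.2 fun A hA => ?_
  obtain ⟨r, hr, hrA⟩ := SpecialLinearGroup.mem_center_iff.mp hA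
  rw [Fintype.card_fin, ← one_pow 2, CharTwo.sq_inj] at hr
  exact Subgroup.mem_bot.2 (Subtype.ext (by rw [← hrA, hr, map_one, SpecialLinearGroup.coe_one]))

noncomputable def SpecialLinearGroup.equivPSLOfCharTwo : SL(2, F) ≃* PSL(2, F) :=
  ((QuotientGroup.quotientMulEquivOfEq center_eq_bot_of_charTwo).trans
    QuotientGroup.quotientBot).symm

end Matrix

theorem charP_two_of_card_eq_two_pow {F : Type*} [Field F] [Fintype F] {n : ℕ}
    (h : Fintype.card F = 2 ^ n) : CharP F 2 :=
  CharTwo.of_one_ne_zero_of_two_eq_zero one_ne_zero <|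
    eq_zero_of_pow_eq_zero (n := n) (by exact_mod_cast h ▸ FiniteField.cast_card_eq_zero F)

theorem stmt_0_general (q : ℕ) (hq2 : ∃ n : ℕ, q = 2 ^ n)
    (F : Type) [Field F] [Fintype F] (hF : Fintype.card F = q) :
    Nat.card (commGraph (PSL(2, F))).ConnectedComponent = q + 1 ∧
    (∀ c : (commGraph (PSL(2, F))).ConnectedComponent, Nat.card c.supp = q - 1) ∧
    (∀ x y : {x : PSL(2, F) // x * x = 1 ∧ x ≠ 1},
      (commGraph (PSL(2, F))).Reachable x y → x ≠ y → (commGraph (PSL(2, F))).Adj x y) := by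
  classical
  obtain ⟨n, rfl⟩ := hq2
  have := charP_two_of_card_eq_two_pow hF
  let e := SpecialLinearGroup.equivPSLOfCharTwo (F := F)
  obtain ⟨hcomp, hsupp, hadj⟩ := commGraph_structure_of_equiv_prod
    (sl2InvolutionEquiv.trans (involutionsCongr e)) fun _ _ =>
      e.commute_map_iff.trans commute_sl2Involution_iff
  refine ⟨?_, fun c => ?_, hadj⟩
  · rw [hcomp, Nat.card_eq_fintype_card, Fintype.card_option, hF]
  · rw [hsupp, Nat.card_eq_fintype_card, Fintype.card_units, hF]

/-- For `q > 3` a power of `2` and `L = PSL(2,q)`, the commuting involution graph of `L`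
has `q + 1` connected components, each of which is a complete graph on `q - 1` vertices. -/
theorem stmt_0 (q : ℕ) (hq2 : ∃ n : ℕ, q = 2 ^ n) (hq3 : 3 < q)
    (F : Type) [Field F] [Fintype F] (hF : Fintype.card F = q) :
    Nat.card (commGraph (PSL(2, F))).ConnectedComponent = q + 1 ∧
    (∀ c : (commGraph (PSL(2, F))).ConnectedComponent, Nat.card c.supp = q - 1) ∧
    (∀ x y : {x : PSL(2, F) // x * x = 1 ∧ x ≠ 1},
      (commGraph (PSL(2, F))).Reachable x y → x ≠ y → (commGraph (PSL(2, F))).Adj x y) :=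
  stmt_0_general q hq2 F hF
end

section
/- Let q > 11 be an odd prime power and L = PSL(2,q). For any two distinct involutions x, y in L, the intersection C_L(x) ∩ C_L(y) is either trivial, of order 2, or equal to the Klein four-group {1, x, y, xy} (the latter only when x and y commute). -/
/-!
Lift to `SL(2, F)`, where two elements of `PSL(2, F)` commute iff their lifts commute or
anticommute. The commutant of a nonscalar `2 × 2` matrix `U` is `span {1, U}`, hence abelian, and
an invertible matrix anticommuting with `U` forces `tr U = 0`, i.e. `U² = -1`. So the centralizer
of a non-involution of `PSL(2, F)` is abelian. Involutions lift to trace-zero matrices, and two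
distinct commuting involutions lift to anticommuting `X, Y`; writing a matrix commuting or
anticommuting with them in `span {1, U}` for `U ∈ {X, Y, XY}` gives `C(x) ∩ C(y) = {1, x, y, xy}`.
If `x, y` do not commute, every element of `C(x) ∩ C(y)` is an involution (otherwise its abelian
centralizer would contain `x` and `y`), and two distinct nontrivial ones `h, k` would commute and
put `x` in `{1, h, k, hk} ⊆ C(y)`.
-/

open Matrix
open scoped MatrixGroups

theorem FiniteField.two_ne_zero_of_odd_card {F : Type*} [Field F] [Fintype F]
    (h : Odd (Fintype.card F)) : (2 : F) ≠ 0 :=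
  Ring.two_ne_zero fun hchar =>
    Nat.not_even_iff_odd.mpr h (Nat.even_iff.mpr (FiniteField.even_card_of_char_two hchar))

theorem eq_zero_of_eq_neg {F M : Type*} [Field F] [AddCommGroup M] [Module F M]
    [NoZeroSMulDivisors F M] (h2 : (2 : F) ≠ 0) {v : M} (h : v = -v) : v = 0 := by
  have h' : (2 : F) • v = 0 := by rw [two_smul]; nth_rewrite 1 [h]; exact neg_add_cancel v
  exact (smul_eq_zero.mp h').resolve_left h2

namespace Matrix

section CommRing

variable {R : Type*} [CommRing R]

theorem mul_self_eq_trace_smul_sub_det_smul (U : Matrix (Fin 2) (Fin 2) R) :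
    U * U = U.trace • U - U.det • 1 := by
  ext i j
  fin_cases i <;> fin_cases j <;>
    simp [mul_apply, trace_fin_two, det_fin_two] <;> ring

end CommRing

variable {F : Type*} [Field F] {A B U V Z : Matrix (Fin 2) (Fin 2) F}

theorem exists_eq_smul_one_add_smul_of_commute (hU : U ∉ Set.range (scalar (Fin 2)))
    (h : Commute A U) : ∃ a b : F, A = a • 1 + b • U := by
  have e (i j : Fin 2) : A i 0 * U 0 j + A i 1 * U 1 j = U i 0 * A 0 j + U i 1 * A 1 j := by
    simpa [mul_apply, Fin.sum_univ_two] using congrFun (congrFun h.eq i) j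
  have hU' : U 0 1 ≠ 0 ∨ U 1 0 ≠ 0 ∨ U 0 0 ≠ U 1 1 := by
    by_contra! hs
    exact hU ⟨U 0 0, by ext i j; fin_cases i <;> fin_cases j <;> simp [hs]⟩
  rcases hU' with h01 | h10 | hd
  · refine ⟨A 0 0 - A 0 1 / U 0 1 * U 0 0, A 0 1 / U 0 1, ?_⟩
    ext i j
    fin_cases i <;> fin_cases j <;> simp <;> field_simp
    · linear_combination -e 0 0
    · linear_combination -e 0 1
  · refine ⟨A 0 0 - A 1 0 / U 1 0 * U 0 0, A 1 0 / U 1 0, ?_⟩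
    ext i j
    fin_cases i <;> fin_cases j <;> simp <;> field_simp
    · linear_combination e 0 0
    · linear_combination e 1 0
  · have hd' : U 0 0 - U 1 1 ≠ 0 := sub_ne_zero.mpr hd
    refine ⟨A 0 0 - (A 0 0 - A 1 1) / (U 0 0 - U 1 1) * U 0 0,
      (A 0 0 - A 1 1) / (U 0 0 - U 1 1), ?_⟩
    ext i j
    fin_cases i <;> fin_cases j <;> simp <;> field_simp
    · linear_combination -e 0 1
    · linear_combination e 1 0
    · ring

theorem commute_of_commute_of_notMem_range_scalar (hU : U ∉ Set.range (scalar (Fin 2)))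
    (hA : Commute A U) (hB : Commute B U) : Commute A B := by
  obtain ⟨a, b, rfl⟩ := exists_eq_smul_one_add_smul_of_commute hU hA
  obtain ⟨c, d, rfl⟩ := exists_eq_smul_one_add_smul_of_commute hU hB
  unfold Commute SemiconjBy
  simp only [add_mul, mul_add, smul_mul_assoc, mul_smul_comm, one_mul, mul_one]
  module

theorem trace_eq_zero_of_mul_self_mem_range_scalar (hU : U ∉ Set.range (scalar (Fin 2)))
    (h : U * U ∈ Set.range (scalar (Fin 2))) : U.trace = 0 := by
  by_contra ht
  obtain ⟨c, hc⟩ := h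
  refine hU ⟨U.trace⁻¹ * (c + U.det), ?_⟩
  have hCH := mul_self_eq_trace_smul_sub_det_smul U
  rw [← hc, eq_sub_iff_add_eq] at hCH
  calc scalar (Fin 2) (U.trace⁻¹ * (c + U.det))
      = U.trace⁻¹ • (scalar (Fin 2) c + U.det • 1) := by
        simp only [scalar_apply, ← smul_one_eq_diagonal, smul_add, smul_smul, mul_add, add_smul]
    _ = U := by rw [hCH, smul_smul, inv_mul_cancel₀ ht, one_smul]

theorem trace_eq_zero_of_anticommute (h2 : (2 : F) ≠ 0) (hA : IsUnit A.det)
    (h : A * U = -(U * A)) : U.trace = 0 := by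
  refine eq_zero_of_eq_neg h2 ?_
  calc U.trace = (A⁻¹ * (A * U)).trace := by rw [← Matrix.mul_assoc, nonsing_inv_mul A hA, one_mul]
    _ = -(U * A * A⁻¹).trace := by rw [h, Matrix.mul_neg, trace_neg, trace_mul_comm]
    _ = -U.trace := by rw [Matrix.mul_assoc, mul_nonsing_inv A hA, mul_one]

theorem notMem_range_scalar_of_anticommute (h2 : (2 : F) ≠ 0) (hU : IsUnit U.det)
    (hV : IsUnit V.det) (h : U * V = -(V * U)) : U ∉ Set.range (scalar (Fin 2)) := by
  rintro ⟨c, rfl⟩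
  have hzero : scalar (Fin 2) c * V = 0 :=
    eq_zero_of_eq_neg h2 (by rwa [← (scalar_commute c (Commute.all c) V).eq] at h)
  have hdet := congrArg det hzero
  rw [det_mul, det_zero] at hdet
  exact (hU.mul hV).ne_zero hdet

theorem exists_eq_smul_one_of_commute_of_commute (h2 : (2 : F) ≠ 0) (hU : IsUnit U.det)
    (hV : IsUnit V.det) (hUV : U * V = -(V * U)) (hZU : Commute Z U) (hZV : Commute Z V) :
    ∃ c : F, Z = c • 1 := by
  obtain ⟨a, b, rfl⟩ :=
    exists_eq_smul_one_add_smul_of_commute (notMem_range_scalar_of_anticommute h2 hU hV hUV) hZU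
  have hb : b • (U * V) = 0 := by
    refine eq_zero_of_eq_neg h2 (add_left_cancel (a := a • V) ?_)
    have := hZV.eq
    simp only [add_mul, mul_add, smul_mul_assoc, mul_smul_comm, one_mul, mul_one] at this
    rw [this, hUV, smul_neg, neg_neg]
  have hUV0 : U * V ≠ 0 := fun h0 => by
    have hdet := congrArg det h0
    rw [det_mul, det_zero] at hdet
    exact (hU.mul hV).ne_zero hdet
  exact ⟨a, by rw [(smul_eq_zero.mp hb).resolve_right hUV0, zero_smul, add_zero]⟩

theorem exists_eq_smul_of_commute_of_anticommute (h2 : (2 : F) ≠ 0) (hU : IsUnit U.det)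
    (hV : IsUnit V.det) (hUV : U * V = -(V * U)) (hZU : Commute Z U) (hZV : Z * V = -(V * Z)) :
    ∃ c : F, Z = c • U := by
  obtain ⟨a, b, rfl⟩ :=
    exists_eq_smul_one_add_smul_of_commute (notMem_range_scalar_of_anticommute h2 hU hV hUV) hZU
  have ha : a • V = 0 := by
    refine eq_zero_of_eq_neg h2 (add_right_cancel (b := b • (U * V)) ?_)
    simp only [add_mul, mul_add, smul_mul_assoc, mul_smul_comm, one_mul, mul_one] at hZV
    rw [hZV, neg_add, ← neg_eq_iff_eq_neg.mpr hUV, smul_neg, neg_neg]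
  have hV0 : V ≠ 0 := fun h0 => by simp [h0] at hV
  exact ⟨b, by rw [(smul_eq_zero.mp ha).resolve_right hV0, zero_smul, zero_add]⟩

theorem exists_eq_smul_of_commute_of_trace_eq_zero (h2 : (2 : F) ≠ 0)
    (hU : U ∉ Set.range (scalar (Fin 2))) (hUt : U.trace = 0) (hZU : Commute Z U)
    (hZt : Z.trace = 0) : ∃ c : F, Z = c • U := by
  obtain ⟨a, b, rfl⟩ := exists_eq_smul_one_add_smul_of_commute hU hZU
  have ha : a * 2 = 0 := by
    simpa [trace_add, trace_smul, hUt] using hZt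
  exact ⟨b, by rw [(mul_eq_zero.mp ha).resolve_right h2, zero_smul, zero_add]⟩

end Matrix

namespace Matrix.SpecialLinearGroup

variable {F : Type*} [Field F]

local notation:1024 "↑ₘ" A:1024 => ((A : SL(2, F)) : Matrix (Fin 2) (Fin 2) F)

theorem isUnit_det_coe (A : SL(2, F)) : IsUnit (↑ₘA).det := by
  rw [det_coe]; exact isUnit_one

theorem coe_mem_range_scalar_iff_mem_center {A : SL(2, F)} :
    ↑ₘA ∈ Set.range (scalar (Fin 2)) ↔ A ∈ Subgroup.center SL(2, F) := by
  rw [mem_center_iff]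
  constructor
  · rintro ⟨r, hr⟩
    refine ⟨r, ?_, hr⟩
    simpa [det_coe] using congrArg det hr
  · rintro ⟨r, -, hr⟩
    exact ⟨r, hr⟩

theorem mem_center_iff_eq_one_or_eq_neg_one {A : SL(2, F)} :
    A ∈ Subgroup.center SL(2, F) ↔ A = 1 ∨ A = -1 := by
  rw [mem_center_iff, Fintype.card_fin]
  constructor
  · rintro ⟨r, hr, hrA⟩
    rcases sq_eq_one_iff.mp hr with rfl | rfl
    · exact Or.inl (Subtype.ext (by rw [coe_one, ← hrA, map_one]))
    · exact Or.inr (Subtype.ext (by rw [coe_neg, coe_one, ← hrA, map_neg, map_one]))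
  · rintro (rfl | rfl)
    · exact ⟨1, one_pow 2, by rw [map_one, coe_one]⟩
    · exact ⟨-1, by norm_num, by rw [map_neg, map_one, coe_neg, coe_one]⟩

theorem mk_eq_mk_iff {A B : SL(2, F)} : (A : PSL(2, F)) = B ↔ A = B ∨ A = -B := by
  rw [QuotientGroup.eq, mem_center_iff_eq_one_or_eq_neg_one, inv_mul_eq_one,
    inv_mul_eq_iff_eq_mul, mul_neg_one]
  exact or_congr Iff.rfl (by rw [eq_comm, neg_eq_iff_eq_neg])

theorem mk_eq_one_iff {A : SL(2, F)} : (A : PSL(2, F)) = 1 ↔ A = 1 ∨ A = -1 := by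
  rw [QuotientGroup.eq_one_iff, mem_center_iff_eq_one_or_eq_neg_one]

theorem commute_mk_iff {A B : SL(2, F)} :
    Commute (A : PSL(2, F)) B ↔ Commute ↑ₘA ↑ₘB ∨ ↑ₘA * ↑ₘB = -(↑ₘB * ↑ₘA) := by
  rw [Commute, SemiconjBy, ← QuotientGroup.mk_mul, ← QuotientGroup.mk_mul, mk_eq_mk_iff,
    Commute, SemiconjBy, ← coe_mul, ← coe_mul, ← coe_neg]
  exact or_congr Subtype.ext_iff Subtype.ext_iff

theorem mk_eq_mk_of_coe_eq_smul {Z W : SL(2, F)} {c : F} (h : ↑ₘZ = c • ↑ₘW) :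
    (Z : PSL(2, F)) = W := by
  have hc : c ^ 2 = 1 := by simpa [det_coe] using (congrArg det h).symm
  refine mk_eq_mk_iff.mpr ?_
  rcases sq_eq_one_iff.mp hc with rfl | rfl
  · exact Or.inl (Subtype.ext (by simpa using h))
  · exact Or.inr (Subtype.ext (by simpa using h))

theorem trace_eq_zero_of_mk_mul_self_eq_one {X : SL(2, F)} (hX : (X : PSL(2, F)) ≠ 1)
    (hXX : (X : PSL(2, F)) * X = 1) : (↑ₘX).trace = 0 := by
  rw [Ne, QuotientGroup.eq_one_iff, ← coe_mem_range_scalar_iff_mem_center] at hX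
  rw [← QuotientGroup.mk_mul, QuotientGroup.eq_one_iff, ← coe_mem_range_scalar_iff_mem_center,
    coe_mul] at hXX
  exact trace_eq_zero_of_mul_self_mem_range_scalar hX hXX

theorem mk_mul_self_eq_one_of_trace_eq_zero {X : SL(2, F)} (h : (↑ₘX).trace = 0) :
    (X : PSL(2, F)) * X = 1 := by
  rw [← QuotientGroup.mk_mul, mk_eq_one_iff]
  refine Or.inr (Subtype.ext ?_)
  rw [coe_mul, mul_self_eq_trace_smul_sub_det_smul, h, det_coe]
  simp

end Matrix.SpecialLinearGroup

open Matrix.SpecialLinearGroup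

namespace Matrix.ProjectiveSpecialLinearGroup

variable {F : Type*} [Field F]

local notation:1024 "↑ₘ" A:1024 => ((A : SL(2, F)) : Matrix (Fin 2) (Fin 2) F)

theorem commute_of_commute_of_mul_self_ne_one (h2 : (2 : F) ≠ 0) {u a b : PSL(2, F)}
    (hu : u ≠ 1) (huu : u * u ≠ 1) (ha : Commute a u) (hb : Commute b u) : Commute a b := by
  obtain ⟨U, rfl⟩ := QuotientGroup.mk_surjective u
  obtain ⟨A, rfl⟩ := QuotientGroup.mk_surjective a
  obtain ⟨B, rfl⟩ := QuotientGroup.mk_surjective b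
  have hUt : (↑ₘU).trace ≠ 0 := mt mk_mul_self_eq_one_of_trace_eq_zero huu
  have hUs : ↑ₘU ∉ Set.range (scalar (Fin 2)) := by
    rwa [coe_mem_range_scalar_iff_mem_center, ← QuotientGroup.eq_one_iff]
  have lift (C : SL(2, F)) (hC : Commute (C : PSL(2, F)) U) : Commute ↑ₘC ↑ₘU :=
    (commute_mk_iff.mp hC).resolve_right
      fun h => hUt (trace_eq_zero_of_anticommute h2 (isUnit_det_coe C) h)
  exact commute_mk_iff.mpr (Or.inl
    (commute_of_commute_of_notMem_range_scalar hUs (lift A ha) (lift B hb)))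

theorem mem_of_commute_of_commute (h2 : (2 : F) ≠ 0) {x y z : PSL(2, F)}
    (hx : x * x = 1) (hx1 : x ≠ 1) (hy : y * y = 1) (hy1 : y ≠ 1) (hxy : x ≠ y)
    (hc : Commute x y) (hzx : Commute z x) (hzy : Commute z y) :
    z ∈ ({1, x, y, x * y} : Set PSL(2, F)) := by
  obtain ⟨X, rfl⟩ := QuotientGroup.mk_surjective x
  obtain ⟨Y, rfl⟩ := QuotientGroup.mk_surjective y
  obtain ⟨Z, rfl⟩ := QuotientGroup.mk_surjective z
  have hXs : ↑ₘX ∉ Set.range (scalar (Fin 2)) := by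
    rwa [coe_mem_range_scalar_iff_mem_center, ← QuotientGroup.eq_one_iff]
  have hXY : ↑ₘX * ↑ₘY = -(↑ₘY * ↑ₘX) := by
    refine (commute_mk_iff.mp hc).resolve_left fun h => hxy ?_
    obtain ⟨c, hc⟩ := exists_eq_smul_of_commute_of_trace_eq_zero h2 hXs
      (trace_eq_zero_of_mk_mul_self_eq_one hx1 hx) h.symm
      (trace_eq_zero_of_mk_mul_self_eq_one hy1 hy)
    exact (mk_eq_mk_of_coe_eq_smul hc).symm
  have hYX : ↑ₘY * ↑ₘX = -(↑ₘX * ↑ₘY) := by rw [hXY, neg_neg]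
  simp only [Set.mem_insert_iff, Set.mem_singleton_iff]
  rcases commute_mk_iff.mp hzx with hZX | hZX <;> rcases commute_mk_iff.mp hzy with hZY | hZY
  · obtain ⟨c, hc⟩ := exists_eq_smul_one_of_commute_of_commute h2 (isUnit_det_coe X)
      (isUnit_det_coe Y) hXY hZX hZY
    exact Or.inl (mk_eq_mk_of_coe_eq_smul (W := 1) (by rwa [coe_one]))
  · obtain ⟨c, hc⟩ := exists_eq_smul_of_commute_of_anticommute h2 (isUnit_det_coe X)
      (isUnit_det_coe Y) hXY hZX hZY
    exact Or.inr (Or.inl (mk_eq_mk_of_coe_eq_smul hc))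
  · obtain ⟨c, hc⟩ := exists_eq_smul_of_commute_of_anticommute h2 (isUnit_det_coe Y)
      (isUnit_det_coe X) hYX hZY hZX
    exact Or.inr (Or.inr (Or.inl (mk_eq_mk_of_coe_eq_smul hc)))
  · have hZXY : Commute ↑ₘZ ↑ₘ(X * Y) := by
      rw [Commute, SemiconjBy, coe_mul, ← Matrix.mul_assoc, hZX, Matrix.neg_mul, Matrix.mul_assoc,
        hZY, Matrix.mul_neg, neg_neg, Matrix.mul_assoc]
    have hXYX : ↑ₘ(X * Y) * ↑ₘX = -(↑ₘX * ↑ₘ(X * Y)) := by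
      rw [coe_mul, Matrix.mul_assoc, hYX, Matrix.mul_neg]
    obtain ⟨c, hc⟩ := exists_eq_smul_of_commute_of_anticommute h2 (isUnit_det_coe (X * Y))
      (isUnit_det_coe X) hXYX hZXY hZX
    exact Or.inr (Or.inr (Or.inr (mk_eq_mk_of_coe_eq_smul hc)))

open Subgroup in
theorem centralizer_inf_centralizer_eq_of_commute (h2 : (2 : F) ≠ 0) {x y : PSL(2, F)}
    (hx : x * x = 1) (hx1 : x ≠ 1) (hy : y * y = 1) (hy1 : y ≠ 1) (hxy : x ≠ y)
    (hc : Commute x y) :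
    ((centralizer {x} ⊓ centralizer {y} : Subgroup PSL(2, F)) : Set PSL(2, F)) =
      {1, x, y, x * y} := by
  have hxH : x ∈ centralizer {x} ⊓ centralizer {y} :=
    mem_inf.mpr ⟨mem_centralizer_singleton_iff.mpr rfl, mem_centralizer_singleton_iff.mpr hc⟩
  have hyH : y ∈ centralizer {x} ⊓ centralizer {y} :=
    mem_inf.mpr ⟨mem_centralizer_singleton_iff.mpr hc.symm, mem_centralizer_singleton_iff.mpr rfl⟩
  ext z
  constructor
  · intro hz
    obtain ⟨hzx, hzy⟩ := mem_inf.mp hz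
    exact mem_of_commute_of_commute h2 hx hx1 hy hy1 hxy hc
      (mem_centralizer_singleton_iff.mp hzx) (mem_centralizer_singleton_iff.mp hzy)
  · rintro (rfl | rfl | rfl | rfl)
    exacts [one_mem _, hxH, hyH, mul_mem hxH hyH]

open Subgroup in
theorem centralizer_inf_centralizer_eq_bot_or_card_eq_two (h2 : (2 : F) ≠ 0) {x y : PSL(2, F)}
    (hxy : ¬Commute x y) :
    centralizer {x} ⊓ centralizer {y} = ⊥ ∨
      Nat.card (centralizer {x} ⊓ centralizer {y} : Subgroup PSL(2, F)) = 2 := by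
  set H : Subgroup PSL(2, F) := centralizer {x} ⊓ centralizer {y}
  have hmem {w : PSL(2, F)} (hw : w ∈ H) : Commute w x ∧ Commute w y :=
    ⟨mem_centralizer_singleton_iff.mp (mem_inf.mp hw).1,
      mem_centralizer_singleton_iff.mp (mem_inf.mp hw).2⟩
  -- the centralizer of a non-involution is abelian, and it would contain `x` and `y`
  have hinv : ∀ w ∈ H, w * w = 1 := fun w hw => by
    by_contra hww
    have hw1 : w ≠ 1 := by rintro rfl; exact hww (mul_one 1)
    exact hxy (commute_of_commute_of_mul_self_ne_one h2 hw1 hww (hmem hw).1.symm (hmem hw).2.symm)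
  have hcomm : ∀ h ∈ H, ∀ k ∈ H, Commute h k := fun h hh k hk =>
    (Commute.of_orderOf_dvd_two (fun g : H => orderOf_dvd_of_pow_eq_one
      (Subtype.ext (by rw [sq]; exact hinv g g.2))) ⟨h, hh⟩ ⟨k, hk⟩).map H.subtype
  -- two distinct involutions in `H` would put `x` in the Klein group they generate, inside `C(y)`
  have huniq : ∀ h ∈ H, ∀ k ∈ H, h ≠ 1 → k ≠ 1 → h = k := by
    intro h hh k hk h1 k1
    by_contra hne
    have hxy' : x ∈ centralizer {y} := by
      have hhy := (mem_inf.mp hh).2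
      have hky := (mem_inf.mp hk).2
      rcases mem_of_commute_of_commute h2 (hinv h hh) h1 (hinv k hk) k1 hne (hcomm h hh k hk)
        (hmem hh).1.symm (hmem hk).1.symm with rfl | rfl | rfl | rfl
      exacts [one_mem _, hhy, hky, mul_mem hhy hky]
    exact hxy (mem_centralizer_singleton_iff.mp hxy')
  rcases H.bot_or_exists_ne_one with hbot | ⟨h, hh, h1⟩
  · exact Or.inl hbot
  · refine Or.inr ((Nat.card_eq_two_iff' (1 : H)).mpr
      ⟨⟨h, hh⟩, fun h' => h1 (congrArg Subtype.val h'), fun k hk => ?_⟩)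
    exact Subtype.ext (huniq k k.2 h hh (fun h' => hk (Subtype.ext h')) h1)

end Matrix.ProjectiveSpecialLinearGroup

open Matrix.ProjectiveSpecialLinearGroup

theorem stmt_3_general (q : ℕ) (hq : Odd q)
    (F : Type) [Field F] [Fintype F] (hF : Fintype.card F = q)
    (x y : PSL(2, F))
    (hx : x * x = 1 ∧ x ≠ 1) (hy : y * y = 1 ∧ y ≠ 1) (hxy : x ≠ y) :
    Subgroup.centralizer {x} ⊓ Subgroup.centralizer {y} = (⊥ : Subgroup (PSL(2, F))) ∨
    Nat.card (Subgroup.centralizer {x} ⊓ Subgroup.centralizer {y} : Subgroup (PSL(2, F))) = 2 ∨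
    (((Subgroup.centralizer {x} ⊓ Subgroup.centralizer {y} : Subgroup (PSL(2, F))) : Set (PSL(2, F)))
        = {1, x, y, x * y} ∧ x * y = y * x) := by
  have h2 : (2 : F) ≠ 0 := FiniteField.two_ne_zero_of_odd_card (hF ▸ hq)
  by_cases hc : Commute x y
  · exact Or.inr (Or.inr
      ⟨centralizer_inf_centralizer_eq_of_commute h2 hx.1 hx.2 hy.1 hy.2 hxy hc, hc⟩)
  · exact (centralizer_inf_centralizer_eq_bot_or_card_eq_two h2 hc).imp_right Or.inl

/-- For `q > 11` an odd prime power and `L = PSL(2,q)`, the intersection of the centralizers of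
two distinct involutions `x, y` of `L` is trivial, of order `2`, or equal to the Klein
four-group `{1, x, y, xy}` (the latter occurring only when `x` and `y` commute). -/
theorem stmt_3 (q : ℕ) (hq : Odd q) (hq11 : 11 < q)
    (F : Type) [Field F] [Fintype F] (hF : Fintype.card F = q)
    (x y : PSL(2, F))
    (hx : x * x = 1 ∧ x ≠ 1) (hy : y * y = 1 ∧ y ≠ 1) (hxy : x ≠ y) :
    Subgroup.centralizer {x} ⊓ Subgroup.centralizer {y} = (⊥ : Subgroup (PSL(2, F))) ∨
    Nat.card (Subgroup.centralizer {x} ⊓ Subgroup.centralizer {y} : Subgroup (PSL(2, F))) = 2 ∨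
    (((Subgroup.centralizer {x} ⊓ Subgroup.centralizer {y} : Subgroup (PSL(2, F))) : Set (PSL(2, F)))
        = {1, x, y, x * y} ∧ x * y = y * x) :=
  stmt_3_general q hq F hF x y hx hy hxy
end

section
/- Let q > 11 be an odd prime power, L = PSL(2,q), X its class of involutions, and C(L,X) the commuting involution graph. For all distinct x,y in X, the number of common neighbours |Δ_1(x) ∩ Δ_1(y)| is at most 1. In particular C(L,X) contains no 4-cycles. -/
open Matrix
open scoped MatrixGroups

/-!
In characteristic `≠ 2` an involution of `PSL(2, F)` lifts to a traceless `A ∈ SL(2, F)`, so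
`A² = -1`, and two distinct involutions commute exactly when their lifts anticommute. If `C` and
`D` lift common neighbours of distinct involutions lifted by `A` and `B`, then `CD` commutes with
`A` and `B`. The polarised Cayley–Hamilton identity shows that the centraliser of `A` is spanned
by `1` and `A`; as `A` and `B` do not commute, `CD` is scalar, so `D = ±C` and the two common
neighbours coincide.
-/

namespace Matrix

variable {R : Type*} [CommRing R]

theorem mul_self_fin_two (M : Matrix (Fin 2) (Fin 2) R) :
    M * M = M.trace • M - M.det • 1 := by
  ext i j
  fin_cases i <;> fin_cases j <;> simp [mul_apply, trace_fin_two, det_fin_two] <;> ring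

theorem mul_add_mul_fin_two_of_trace_eq_zero {M : Matrix (Fin 2) (Fin 2) R} (hM : M.trace = 0)
    (N : Matrix (Fin 2) (Fin 2) R) : M * N + N * M = N.trace • M + (M * N).trace • 1 := by
  rw [trace_fin_two, add_eq_zero_iff_eq_neg'] at hM
  ext i j
  fin_cases i <;> fin_cases j <;> simp [mul_apply, trace_fin_two, hM] <;> ring

end Matrix

theorem commute_mul_of_mul_eq_neg_mul {R : Type*} [Ring R] {a b c : R} (hb : a * b = -(b * a))
    (hc : a * c = -(c * a)) : Commute a (b * c) := by
  rw [Commute, SemiconjBy, ← mul_assoc, hb, neg_mul, mul_assoc, hc, mul_neg, neg_neg, mul_assoc]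

section SL2

variable {F : Type*} [Field F]

local notation:1024 "↑ₘ" A:1024 => ((A : SL(2, F)) : Matrix (Fin 2) (Fin 2) F)

namespace Matrix.SpecialLinearGroup

theorem mul_self_eq_neg_one_of_trace_eq_zero {A : SL(2, F)} (hA : (↑ₘA).trace = 0) :
    ↑ₘA * ↑ₘA = -1 := by
  simp [mul_self_fin_two, hA]

theorem trace_eq_zero_of_mul_self_eq_neg_one {A : SL(2, F)} (hA : ↑ₘA * ↑ₘA = -1) :
    (↑ₘA).trace = 0 := by
  rw [mul_self_fin_two, det_coe, one_smul, sub_eq_neg_self] at hA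
  exact (smul_eq_zero.mp hA).resolve_right fun h0 => by simpa [h0] using A.det_coe

theorem coe_eq_coe_iff {A B : SL(2, F)} : (A : PSL(2, F)) = B ↔ B = A ∨ B = -A := by
  rw [QuotientGroup.eq, mem_center_iff_eq_one_or_eq_neg_one, inv_mul_eq_one, inv_mul_eq_iff_eq_mul,
    mul_neg_one, eq_comm]

variable (h2 : (2 : F) ≠ 0)
include h2

theorem eq_smul_one_sub_smul_of_commute {A : SL(2, F)} (hA : (↑ₘA).trace = 0)
    {N : Matrix (Fin 2) (Fin 2) F} (hN : Commute ↑ₘA N) :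
    N = (N.trace / 2) • 1 - ((↑ₘA * N).trace / 2) • ↑ₘA := by
  have hAN : ↑ₘA * N = (N.trace / 2) • ↑ₘA + ((↑ₘA * N).trace / 2) • 1 := by
    have h := mul_add_mul_fin_two_of_trace_eq_zero hA N
    rw [← hN.eq, ← two_smul F] at h
    rw [div_eq_inv_mul, div_eq_inv_mul, mul_smul, mul_smul, ← smul_add, ← h, smul_smul,
      inv_mul_cancel₀ h2, one_smul]
  set s := N.trace / 2
  set t := (↑ₘA * N).trace / 2
  have hAA := mul_self_eq_neg_one_of_trace_eq_zero hA
  calc N = -(↑ₘA * (↑ₘA * N)) := by rw [← mul_assoc, hAA, neg_one_mul, neg_neg]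
    _ = s • 1 - t • ↑ₘA := by
      rw [hAN, mul_add, Matrix.mul_smul, Matrix.mul_smul, hAA, mul_one]; module

theorem eq_or_eq_neg_of_commute {A B : SL(2, F)} (hA : (↑ₘA).trace = 0) (hB : (↑ₘB).trace = 0)
    (h : Commute ↑ₘA ↑ₘB) : B = A ∨ B = -A := by
  have hBA := eq_smul_one_sub_smul_of_commute h2 hA h
  rw [hB, zero_div, zero_smul, zero_sub, ← neg_smul] at hBA
  set c := -((↑ₘA * ↑ₘB).trace / 2)
  have hc : c ^ 2 = 1 := by simpa [hBA] using B.det_coe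
  rcases sq_eq_one_iff.mp hc with hc | hc
  · exact Or.inl (Subtype.ext (by rw [hBA, hc, one_smul]))
  · exact Or.inr (Subtype.ext (by rw [hBA, hc, neg_one_smul, coe_neg]))

theorem exists_eq_smul_one_of_commute_of_commute {A : SL(2, F)} (hA : (↑ₘA).trace = 0)
    {B N : Matrix (Fin 2) (Fin 2) F} (hAB : ¬Commute ↑ₘA B) (hAN : Commute ↑ₘA N)
    (hBN : Commute B N) : ∃ s : F, N = s • 1 := by
  have hN := eq_smul_one_sub_smul_of_commute h2 hA hAN
  set s := N.trace / 2
  set t := (↑ₘA * N).trace / 2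
  suffices ht : t = 0 by exact ⟨s, by rw [hN, ht, zero_smul, sub_zero]⟩
  by_contra ht
  have hBA : Commute B (t • ↑ₘA) := by
    rw [show t • ↑ₘA = s • 1 - N by rw [hN]; abel]
    exact ((Commute.one_right B).smul_right s).sub_right hBN
  exact hAB (by simpa [ht] using (hBA.smul_right t⁻¹).symm)

theorem eq_or_eq_neg_of_anticommute {A B C D : SL(2, F)} (hA : (↑ₘA).trace = 0)
    (hC : (↑ₘC).trace = 0) (hAB : ¬Commute ↑ₘA ↑ₘB)
    (hAC : ↑ₘA * ↑ₘC = -(↑ₘC * ↑ₘA)) (hBC : ↑ₘB * ↑ₘC = -(↑ₘC * ↑ₘB))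
    (hAD : ↑ₘA * ↑ₘD = -(↑ₘD * ↑ₘA)) (hBD : ↑ₘB * ↑ₘD = -(↑ₘD * ↑ₘB)) :
    D = C ∨ D = -C := by
  obtain ⟨s, hs⟩ := exists_eq_smul_one_of_commute_of_commute h2 hA hAB
    (commute_mul_of_mul_eq_neg_mul hAC hAD) (commute_mul_of_mul_eq_neg_mul hBC hBD)
  have hs2 : s ^ 2 = 1 := by simpa [hs] using (C * D).det_coe
  have hD : ↑ₘD = -(s • ↑ₘC) :=
    calc ↑ₘD = -(↑ₘC * (↑ₘC * ↑ₘD)) := by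
          rw [← mul_assoc, mul_self_eq_neg_one_of_trace_eq_zero hC, neg_one_mul, neg_neg]
      _ = -(s • ↑ₘC) := by rw [hs, Matrix.mul_smul, mul_one]
  rcases sq_eq_one_iff.mp hs2 with rfl | rfl
  · exact Or.inr (Subtype.ext (by rw [hD, one_smul, coe_neg]))
  · exact Or.inl (Subtype.ext (by rw [hD, neg_one_smul, neg_neg]))

theorem mem_center_of_mul_self_eq_one {A : SL(2, F)} (h : A * A = 1) :
    A ∈ Subgroup.center SL(2, F) := by
  have hA : (↑ₘA).trace • ↑ₘA = (2 : F) • 1 := by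
    have := congrArg Subtype.val h
    rw [coe_mul, mul_self_fin_two, det_coe, one_smul, coe_one, sub_eq_iff_eq_add] at this
    rw [this, two_smul]
  have ht : (↑ₘA).trace ≠ 0 := fun h0 => by
    rw [h0, zero_smul, eq_comm, smul_eq_zero] at hA
    exact hA.elim h2 one_ne_zero
  have hA' : ↑ₘA = ((↑ₘA).trace⁻¹ * 2) • 1 := by
    rw [mul_smul, ← hA, smul_smul, inv_mul_cancel₀ ht, one_smul]
  refine Subgroup.mem_center_iff.mpr fun g => Subtype.ext ?_
  rw [coe_mul, coe_mul, hA', Matrix.mul_smul, Matrix.smul_mul, mul_one, one_mul]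

theorem trace_eq_zero_of_coe_mul_self_eq_one {A : SL(2, F)} (h1 : (A : PSL(2, F)) ≠ 1)
    (h : (A : PSL(2, F)) * A = 1) : (↑ₘA).trace = 0 := by
  rw [← QuotientGroup.mk_mul, ← QuotientGroup.mk_one, coe_eq_coe_iff] at h
  rcases h with h | h
  · exact absurd ((QuotientGroup.eq_one_iff A).mpr (mem_center_of_mul_self_eq_one h2 h.symm)) h1
  · refine trace_eq_zero_of_mul_self_eq_neg_one ?_
    have := congrArg Subtype.val h
    rw [coe_one, coe_neg, coe_mul] at this
    exact neg_eq_iff_eq_neg.mp this.symm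

theorem mul_eq_neg_mul_of_coe_commute {A C : SL(2, F)} (hA : (↑ₘA).trace = 0)
    (hC : (↑ₘC).trace = 0) (hne : (A : PSL(2, F)) ≠ C) (h : (A : PSL(2, F)) * C = C * A) :
    ↑ₘA * ↑ₘC = -(↑ₘC * ↑ₘA) := by
  rw [← QuotientGroup.mk_mul, ← QuotientGroup.mk_mul, coe_eq_coe_iff] at h
  rcases h with h | h
  · have hAC : Commute ↑ₘA ↑ₘC := by
      have := congrArg Subtype.val h
      rw [coe_mul, coe_mul] at this
      exact this.symm
    exact absurd (coe_eq_coe_iff.mpr (eq_or_eq_neg_of_commute h2 hA hC hAC)) hne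
  · have := congrArg Subtype.val h
    rw [coe_neg, coe_mul, coe_mul] at this
    rw [this, neg_neg]

end Matrix.SpecialLinearGroup

open Matrix.SpecialLinearGroup

variable (h2 : (2 : F) ≠ 0)
include h2

theorem exists_lift_trace_eq_zero (x : {x : PSL(2, F) // x * x = 1 ∧ x ≠ 1}) :
    ∃ A : SL(2, F), (A : PSL(2, F)) = x ∧ (↑ₘA).trace = 0 := by
  obtain ⟨A, hA⟩ := QuotientGroup.mk_surjective x.1
  exact ⟨A, hA, trace_eq_zero_of_coe_mul_self_eq_one h2 (hA ▸ x.2.2) (hA ▸ x.2.1)⟩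

theorem mul_eq_neg_mul_of_commGraph_adj {x z : {x : PSL(2, F) // x * x = 1 ∧ x ≠ 1}}
    {A C : SL(2, F)} (hA : (A : PSL(2, F)) = x) (hC : (C : PSL(2, F)) = z)
    (hAt : (↑ₘA).trace = 0) (hCt : (↑ₘC).trace = 0) (h : (commGraph PSL(2, F)).Adj x z) :
    ↑ₘA * ↑ₘC = -(↑ₘC * ↑ₘA) :=
  mul_eq_neg_mul_of_coe_commute h2 hAt hCt (fun h' => h.1 (Subtype.ext (hA ▸ hC ▸ h')))
    (hA ▸ hC ▸ h.2)

theorem commGraph_PSL_two_commonNeighbors_subsingleton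
    {x y : {x : PSL(2, F) // x * x = 1 ∧ x ≠ 1}} (hxy : x ≠ y) :
    ((commGraph PSL(2, F)).commonNeighbors x y).Subsingleton := by
  rintro z ⟨hxz, hyz⟩ w ⟨hxw, hyw⟩
  obtain ⟨A, hA, hAt⟩ := exists_lift_trace_eq_zero h2 x
  obtain ⟨B, hB, hBt⟩ := exists_lift_trace_eq_zero h2 y
  obtain ⟨C, hC, hCt⟩ := exists_lift_trace_eq_zero h2 z
  obtain ⟨D, hD, hDt⟩ := exists_lift_trace_eq_zero h2 w
  have hAB : ¬Commute ↑ₘA ↑ₘB := fun h => hxy (Subtype.ext (by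
    rw [← hA, ← hB, coe_eq_coe_iff.mpr (eq_or_eq_neg_of_commute h2 hAt hBt h)]))
  have hCD := eq_or_eq_neg_of_anticommute h2 hAt hCt hAB
    (mul_eq_neg_mul_of_commGraph_adj h2 hA hC hAt hCt hxz)
    (mul_eq_neg_mul_of_commGraph_adj h2 hB hC hBt hCt hyz)
    (mul_eq_neg_mul_of_commGraph_adj h2 hA hD hAt hDt hxw)
    (mul_eq_neg_mul_of_commGraph_adj h2 hB hD hBt hDt hyw)
  exact Subtype.ext (by rw [← hC, ← hD, coe_eq_coe_iff.mpr hCD])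

end SL2

theorem stmt_4_general (q : ℕ) (hq : Odd q)
    (F : Type) [Field F] [Fintype F] (hF : Fintype.card F = q) :
    (∀ x y : {x : PSL(2, F) // x * x = 1 ∧ x ≠ 1}, x ≠ y →
      {z | (commGraph (PSL(2, F))).Adj x z ∧ (commGraph (PSL(2, F))).Adj y z}.Subsingleton) ∧
    (∀ a b c d : {x : PSL(2, F) // x * x = 1 ∧ x ≠ 1},
      (commGraph (PSL(2, F))).Adj a b → (commGraph (PSL(2, F))).Adj b c →
      (commGraph (PSL(2, F))).Adj c d → (commGraph (PSL(2, F))).Adj d a →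
      a ≠ c → b ≠ d → False) := by
  have h2 : (2 : F) ≠ 0 := Ring.two_ne_zero fun h => by
    have := FiniteField.even_card_iff_char_two.mp h
    rw [hF, Nat.odd_iff.mp hq] at this
    exact one_ne_zero this
  have common := fun x y (hxy : x ≠ y) => commGraph_PSL_two_commonNeighbors_subsingleton h2 hxy
  exact ⟨common, fun a b c d hab hbc hcd hda hac hbd =>
    hbd (common a c hac ⟨hab, hbc.symm⟩ ⟨hda.symm, hcd⟩)⟩

/-- For `q > 11` an odd prime power and `L = PSL(2,q)`, any two distinct vertices of the
commuting involution graph `C(L,X)` have at most one common neighbour; in particular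
`C(L,X)` contains no 4-cycles. -/
theorem stmt_4 (q : ℕ) (hq : Odd q) (hq11 : 11 < q)
    (F : Type) [Field F] [Fintype F] (hF : Fintype.card F = q) :
    (∀ x y : {x : PSL(2, F) // x * x = 1 ∧ x ≠ 1}, x ≠ y →
      {z | (commGraph (PSL(2, F))).Adj x z ∧ (commGraph (PSL(2, F))).Adj y z}.Subsingleton) ∧
    (∀ a b c d : {x : PSL(2, F) // x * x = 1 ∧ x ≠ 1},
      (commGraph (PSL(2, F))).Adj a b → (commGraph (PSL(2, F))).Adj b c →
      (commGraph (PSL(2, F))).Adj c d → (commGraph (PSL(2, F))).Adj d a →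
      a ≠ c → b ≠ d → False) :=
  stmt_4_general q hq F hF
end

section
/- Let q ≡ 1 (mod 4) be a prime power, ι ∈ GF(q) with ι² = -1, and let t, s be the involutions of PSL(2,q) represented by diag(ι,-ι) and [[0,1],[-1,0]] respectively. Then Δ_1(s) ∩ Δ_2(t) consists exactly of the elements represented by [[σ,τ],[τ,-σ]] with σ, τ both nonzero and σ² + τ² = -1. -/
open Matrix
open scoped MatrixGroups

theorem commGraph_adj_iff {G : Type*} [Group G] {x y : {x : G // x * x = 1 ∧ x ≠ 1}} :
    (commGraph G).Adj x y ↔ (x : G) ≠ y ∧ Commute (x : G) y :=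
  and_congr_left' Subtype.ext_iff.not

theorem SimpleGraph.dist_eq_two_iff_of_adj_of_adj {V : Type*} {G : SimpleGraph V} {u v w : V}
    (huw : G.Adj u w) (hwv : G.Adj w v) : G.dist u v = 2 ↔ u ≠ v ∧ ¬G.Adj u v := by
  rw [dist, ENat.toNat_eq_iff two_ne_zero, Nat.cast_ofNat, edist_eq_two_iff]
  exact ⟨fun h => ⟨h.1, h.2.1⟩, fun h => ⟨h.1, h.2, w, huw, hwv.symm⟩⟩

theorem neg_eq_self_iff_of_two_ne_zero {R : Type*} [CommRing R] [NoZeroDivisors R]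
    (h2 : (2 : R) ≠ 0) {x : R} : -x = x ↔ x = 0 :=
  ⟨fun h => (mul_eq_zero.mp (by linear_combination -h : 2 * x = 0)).resolve_left h2,
    fun h => by rw [h, neg_zero]⟩

namespace Matrix.SpecialLinearGroup

section CommRing

variable {R : Type*} [CommRing R]

theorem mul_self_eq_trace_smul_sub_one [Nontrivial R] (B : SL(2, R)) :
    (B : Matrix (Fin 2) (Fin 2) R) * B = trace (B : Matrix (Fin 2) (Fin 2) R) • B - 1 := by
  have h := aeval_self_charpoly (B : Matrix (Fin 2) (Fin 2) R)
  rw [charpoly_fin_two, B.2] at h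
  simp only [map_one, map_add, Polynomial.aeval_sub, map_pow, Polynomial.aeval_X, map_mul,
    Polynomial.aeval_C, Algebra.algebraMap_eq_smul_one, Algebra.smul_mul_assoc, one_mul] at h
  rwa [eq_sub_iff_add_eq, ← sq, ← sub_eq_zero, ← sub_add_eq_add_sub]

variable [IsDomain R]

theorem coe_psl_eq_coe_psl_iff (A B : SL(2, R)) :
    (A : PSL(2, R)) = B ↔
      (B : Matrix (Fin 2) (Fin 2) R) = A ∨ (B : Matrix (Fin 2) (Fin 2) R) = -A := by
  have hscalar (r : R) : scalar (Fin 2) r = ((A⁻¹ * B : SL(2, R)) : Matrix (Fin 2) (Fin 2) R) ↔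
      (B : Matrix (Fin 2) (Fin 2) R) = r • (A : Matrix (Fin 2) (Fin 2) R) := by
    constructor
    · intro h
      rw [← mul_inv_cancel_left A B, coe_mul, ← h, scalar_apply, ← smul_one_eq_diagonal,
        Matrix.mul_smul, mul_one]
    · intro h
      rw [coe_mul, coe_inv, h, Matrix.mul_smul, adjugate_mul, A.2, one_smul, scalar_apply,
        smul_one_eq_diagonal]
  rw [QuotientGroup.eq, mem_center_iff, Fintype.card_fin]
  simp only [hscalar, sq_eq_one_iff]
  constructor
  · rintro ⟨r, rfl | rfl, h⟩ <;> simp [h]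
  · rintro (h | h)
    · exact ⟨1, Or.inl rfl, by simp [h]⟩
    · exact ⟨-1, Or.inr rfl, by simp [h]⟩

theorem commute_coe_psl_iff (A B : SL(2, R)) :
    Commute (A : PSL(2, R)) B ↔
      (A : Matrix (Fin 2) (Fin 2) R) * B = B * A ∨
        (A : Matrix (Fin 2) (Fin 2) R) * B = -(B * A) := by
  rw [commute_iff_eq, ← QuotientGroup.mk_mul, ← QuotientGroup.mk_mul, coe_psl_eq_coe_psl_iff,
    coe_mul, coe_mul]
  exact or_congr eq_comm (eq_comm.trans neg_eq_iff_eq_neg)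

theorem trace_eq_zero_of_coe_psl_mul_self (h2 : (2 : R) ≠ 0) {B : SL(2, R)}
    (hB : (B : PSL(2, R)) * B = 1) (hB1 : (B : PSL(2, R)) ≠ 1) :
    trace (B : Matrix (Fin 2) (Fin 2) R) = 0 := by
  rw [← QuotientGroup.mk_mul, ← QuotientGroup.mk_one, eq_comm, coe_psl_eq_coe_psl_iff, coe_mul,
    coe_one, mul_self_eq_trace_smul_sub_one, sub_eq_iff_eq_add, sub_eq_iff_eq_add,
    neg_add_cancel] at hB
  rcases hB with hB | hB
  · -- `B² = 1` would make `B` a multiple of `1`, hence central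
    refine absurd (QuotientGroup.eq_one_iff B |>.mpr <| Subgroup.mem_center_iff.mpr fun g => ?_) hB1
    have htr : trace (B : Matrix (Fin 2) (Fin 2) R) ≠ 0 := fun htr => h2 <| by
      simpa [htr, one_add_one_eq_two] using (congr_fun₂ hB 0 0).symm
    refine Subtype.ext (smul_right_injective _ htr ?_)
    dsimp only
    rw [coe_mul, coe_mul, ← mul_smul_comm, ← smul_mul_assoc, hB]
    simp [mul_add, add_mul]
  · exact (smul_eq_zero.mp hB).resolve_right fun h => by simpa [h] using B.2

end CommRing

variable {F : Type*} [Field F]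

theorem two_ne_zero_of_diag_coe_psl_ne_one {t : SL(2, F)} {ι : F}
    (ht : (t : Matrix (Fin 2) (Fin 2) F) = !![ι, 0; 0, -ι]) (ht1 : (t : PSL(2, F)) ≠ 1) :
    (2 : F) ≠ 0 := by
  intro h2
  have hneg (x : F) : -x = x := by linear_combination -x * h2
  have hι : ι ^ 2 = 1 := by simpa [ht, hneg, sq] using t.2
  apply ht1
  rw [← QuotientGroup.mk_one, coe_psl_eq_coe_psl_iff, coe_one, ht, hneg]
  rcases sq_eq_one_iff.mp hι with rfl | rfl
  · exact Or.inl one_fin_two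
  · exact Or.inr (by simp [one_fin_two, hneg])

theorem ne_and_commute_antidiag_iff (h2 : (2 : F) ≠ 0) {s : SL(2, F)}
    (hs : (s : Matrix (Fin 2) (Fin 2) F) = !![0, 1; -1, 0]) {y : PSL(2, F)} (hy : y * y = 1)
    (hy1 : y ≠ 1) :
    (s : PSL(2, F)) ≠ y ∧ Commute (s : PSL(2, F)) y ↔
      ∃ a b : F, a ^ 2 + b ^ 2 = -1 ∧
        ∃ m : SL(2, F), (m : Matrix (Fin 2) (Fin 2) F) = !![a, b; b, -a] ∧ y = m := by
  constructor
  · rintro ⟨hne, hcomm⟩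
    obtain ⟨B, rfl⟩ := QuotientGroup.mk_surjective y
    have htr := trace_eq_zero_of_coe_psl_mul_self h2 hy hy1
    set a := (B : Matrix (Fin 2) (Fin 2) F) 0 0
    set b := (B : Matrix (Fin 2) (Fin 2) F) 0 1
    set c := (B : Matrix (Fin 2) (Fin 2) F) 1 0
    have hB : (B : Matrix (Fin 2) (Fin 2) F) = !![a, b; c, -a] := by
      rw [trace_fin_two, add_eq_zero_iff_eq_neg'] at htr
      rw [eta_fin_two (B : Matrix (Fin 2) (Fin 2) F), htr]
    have hdet : -a ^ 2 - b * c = 1 := by simpa [hB, sq] using B.2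
    rw [commute_coe_psl_iff, hs, hB, mul_fin_two, mul_fin_two] at hcomm
    simp only [zero_mul, one_mul, zero_add, mul_neg, neg_mul, add_zero, neg_zero, mul_zero, mul_one,
      neg_neg, EmbeddingLike.apply_eq_iff_eq, vecCons_inj, neg_eq_self_iff_of_two_ne_zero h2,
      and_true, neg_of, neg_cons, neg_empty, neg_inj, true_and] at hcomm
    rcases hcomm with ⟨⟨hcb, ha0⟩, -⟩ | ⟨hcb, -⟩
    · have hb : b ^ 2 = 1 := by linear_combination hdet + b * hcb + a * ha0
      refine absurd ?_ hne
      rw [coe_psl_eq_coe_psl_iff, hB, hs, hcb, ha0]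
      rcases sq_eq_one_iff.mp hb with hb | hb <;> simp [hb]
    · exact ⟨a, b, by linear_combination -hdet - b * hcb, B, by rw [hB, hcb], rfl⟩
  · rintro ⟨a, b, -, m, hm, rfl⟩
    rw [commute_coe_psl_iff, ne_eq, coe_psl_eq_coe_psl_iff, hs, hm, mul_fin_two, mul_fin_two]
    simp only [EmbeddingLike.apply_eq_iff_eq, vecCons_inj, and_true, neg_of, neg_cons, neg_zero,
      neg_empty, neg_neg, zero_mul, one_mul, zero_add, mul_neg, neg_mul, add_zero, mul_zero, mul_one]
    grind

theorem coe_psl_diag_eq_iff {t : SL(2, F)} {ι : F}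
    (ht : (t : Matrix (Fin 2) (Fin 2) F) = !![ι, 0; 0, -ι]) (hι : ι ^ 2 = -1) {m : SL(2, F)}
    {a b : F} (hm : (m : Matrix (Fin 2) (Fin 2) F) = !![a, b; b, -a]) :
    (t : PSL(2, F)) = m ↔ b = 0 := by
  have hdet : -a ^ 2 - b * b = 1 := by simpa [hm, sq] using m.2
  rw [coe_psl_eq_coe_psl_iff, ht, hm]
  simp only [EmbeddingLike.apply_eq_iff_eq, vecCons_inj, and_true, neg_inj, neg_of, neg_cons,
    neg_zero, neg_empty, neg_neg]
  constructor
  · rintro (⟨⟨-, hb⟩, -⟩ | ⟨⟨-, hb⟩, -⟩) <;> exact hb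
  · rintro rfl
    rcases sq_eq_sq_iff_eq_or_eq_neg.mp (by linear_combination -hdet - hι : a ^ 2 = ι ^ 2)
      with rfl | rfl <;> simp

theorem commute_diag_iff (h2 : (2 : F) ≠ 0) {t : SL(2, F)} {ι : F}
    (ht : (t : Matrix (Fin 2) (Fin 2) F) = !![ι, 0; 0, -ι]) (hι : ι ≠ 0) {m : SL(2, F)}
    {a b : F} (hm : (m : Matrix (Fin 2) (Fin 2) F) = !![a, b; b, -a]) :
    Commute (t : PSL(2, F)) m ↔ a = 0 ∨ b = 0 := by
  rw [commute_coe_psl_iff, ht, hm, mul_fin_two, mul_fin_two]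
  simp only [EmbeddingLike.apply_eq_iff_eq, vecCons_inj, and_true, neg_of, neg_cons, neg_empty]
  simp [mul_comm _ ι, eq_neg_iff_add_eq_zero, neg_eq_iff_add_eq_zero, ← two_mul, h2, hι, or_comm]

end Matrix.SpecialLinearGroup

open Matrix.SpecialLinearGroup

theorem stmt_8_general (F : Type) [Field F]
    (ι : F) (hι : ι ^ 2 = -1)
    (t s : SpecialLinearGroup (Fin 2) F)
    (htm : (t : Matrix (Fin 2) (Fin 2) F) = !![ι, 0; 0, -ι])
    (hsm : (s : Matrix (Fin 2) (Fin 2) F) = !![0, 1; -1, 0])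
    (ht : ((t : PSL(2, F)) * (t : PSL(2, F)) = 1 ∧ (t : PSL(2, F)) ≠ 1))
    (hs : ((s : PSL(2, F)) * (s : PSL(2, F)) = 1 ∧ (s : PSL(2, F)) ≠ 1)) :
    (commGraph (PSL(2, F))).neighborSet ⟨(s : PSL(2, F)), hs⟩ ∩
      {y : {x : PSL(2, F) // x * x = 1 ∧ x ≠ 1} |
        (commGraph (PSL(2, F))).dist ⟨(t : PSL(2, F)), ht⟩ y = 2} =
      {y : {x : PSL(2, F) // x * x = 1 ∧ x ≠ 1} | ∃ σ τ : F, σ ≠ 0 ∧ τ ≠ 0 ∧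
        σ ^ 2 + τ ^ 2 = -1 ∧
        ∃ m : SpecialLinearGroup (Fin 2) F,
          (m : Matrix (Fin 2) (Fin 2) F) = !![σ, τ; τ, -σ] ∧ (y : PSL(2, F)) = (m : PSL(2, F))} := by
  have h2 : (2 : F) ≠ 0 := two_ne_zero_of_diag_coe_psl_ne_one htm ht.2
  have hι0 : ι ≠ 0 := by rintro rfl; simp at hι
  have hΔ₁ (y : {x : PSL(2, F) // x * x = 1 ∧ x ≠ 1}) :
      (commGraph (PSL(2, F))).Adj ⟨s, hs⟩ y ↔ ∃ a b : F, a ^ 2 + b ^ 2 = -1 ∧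
        ∃ m : SL(2, F), (m : Matrix (Fin 2) (Fin 2) F) = !![a, b; b, -a] ∧ (y : PSL(2, F)) = m :=
    commGraph_adj_iff.trans (ne_and_commute_antidiag_iff h2 hsm y.2.1 y.2.2)
  have hst : (commGraph (PSL(2, F))).Adj ⟨s, hs⟩ ⟨t, ht⟩ :=
    (hΔ₁ _).mpr ⟨ι, 0, by simp [hι], t, htm, rfl⟩
  ext y
  rw [Set.mem_inter_iff, SimpleGraph.mem_neighborSet, Set.mem_ofPred_eq, Set.mem_ofPred_eq,
    and_congr_right (SimpleGraph.dist_eq_two_iff_of_adj_of_adj hst.symm), hΔ₁]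
  simp only [commGraph_adj_iff, ne_eq, Subtype.ext_iff]
  constructor
  · rintro ⟨⟨a, b, hab, m, hm, hy⟩, hty, hcomm⟩
    rw [hy, coe_psl_diag_eq_iff htm hι hm] at hty
    rw [hy, coe_psl_diag_eq_iff htm hι hm, commute_diag_iff h2 htm hι0 hm] at hcomm
    exact ⟨a, b, by tauto, hty, hab, m, hm, hy⟩
  · rintro ⟨a, b, ha, hb, hab, m, hm, hy⟩
    refine ⟨⟨a, b, hab, m, hm, hy⟩, ?_⟩
    rw [hy, coe_psl_diag_eq_iff htm hι hm, commute_diag_iff h2 htm hι0 hm]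
    tauto

/-- For `q ≡ 1 (mod 4)`, `ι² = -1`, `t = diag(ι,-ι)` and `s = [[0,1],[-1,0]]` in `PSL(2,q)`,
the set `Δ₁(s) ∩ Δ₂(t)` consists exactly of the elements represented by matrices
`[[σ,τ],[τ,-σ]]` with `σ, τ ≠ 0` and `σ² + τ² = -1`. -/
theorem stmt_8 (q : ℕ) (hq1 : q % 4 = 1) (hq3 : 3 < q)
    (F : Type) [Field F] [Fintype F] (hF : Fintype.card F = q)
    (ι : F) (hι : ι ^ 2 = -1)
    (t s : SpecialLinearGroup (Fin 2) F)
    (htm : (t : Matrix (Fin 2) (Fin 2) F) = !![ι, 0; 0, -ι])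
    (hsm : (s : Matrix (Fin 2) (Fin 2) F) = !![0, 1; -1, 0])
    (ht : ((t : PSL(2, F)) * (t : PSL(2, F)) = 1 ∧ (t : PSL(2, F)) ≠ 1))
    (hs : ((s : PSL(2, F)) * (s : PSL(2, F)) = 1 ∧ (s : PSL(2, F)) ≠ 1)) :
    (commGraph (PSL(2, F))).neighborSet ⟨(s : PSL(2, F)), hs⟩ ∩
      {y : {x : PSL(2, F) // x * x = 1 ∧ x ≠ 1} |
        (commGraph (PSL(2, F))).dist ⟨(t : PSL(2, F)), ht⟩ y = 2} =
      {y : {x : PSL(2, F) // x * x = 1 ∧ x ≠ 1} | ∃ σ τ : F, σ ≠ 0 ∧ τ ≠ 0 ∧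
        σ ^ 2 + τ ^ 2 = -1 ∧
        ∃ m : SpecialLinearGroup (Fin 2) F,
          (m : Matrix (Fin 2) (Fin 2) F) = !![σ, τ; τ, -σ] ∧ (y : PSL(2, F)) = (m : PSL(2, F))} :=
  stmt_8_general F ι hι t s htm hsm ht hs
end

section
/- Let q ≡ 1 (mod 4) be a prime power, t = diag(ι,-ι) with ι² = -1, t_ω = [[0,ω],[-1/ω,0]] ∈ Δ_1(t) for ω ≠ 0, and s_{σ,τ} = [[σ,τ],[τ,-σ]] with σ,τ ≠ 0 and σ² + τ² = -1 (so s_{σ,τ} ∈ Δ_2(t)). Then the product t_ω · s_{σ,τ} has two distinct eigenvalues if and only if ω⁴ - (2 + 4/τ²)ω² + 1 is a nonzero square in GF(q). -/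
/-!
The characteristic polynomial of `t_ω s_{σ,τ}` is `X² - (ωτ - τ/ω) X + 1`, since `det t_ω = 1` and
`det s_{σ,τ} = -(σ² + τ²) = 1`. Away from characteristic two a quadratic has two distinct roots
iff its discriminant is a nonzero square, and here the discriminant `(ωτ - τ/ω)² - 4` equals
`(τ/ω)² (ω⁴ - (2 + 4/τ²) ω² + 1)`; multiplying by the nonzero square `(τ/ω)²` does not change
being a nonzero square. A field with `q ≡ 1 (mod 4)` elements has odd characteristic.
-/

open Matrix Polynomial

theorem exists_ne_quadratic_roots_iff {K : Type*} [Field K] [NeZero (2 : K)] {a b c : K}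
    (ha : a ≠ 0) :
    (∃ x y, x ≠ y ∧ a * (x * x) + b * x + c = 0 ∧ a * (y * y) + b * y + c = 0) ↔
      ∃ s, s ≠ 0 ∧ discrim a b c = s ^ 2 := by
  constructor
  · rintro ⟨x, y, hxy, hx, hy⟩
    refine ⟨2 * a * x + b, fun hs => hxy ?_, discrim_eq_sq_of_quadratic_eq_zero hx⟩
    have hdisc : discrim a b c = 0 := by rw [discrim_eq_sq_of_quadratic_eq_zero hx, hs]; ring
    rw [quadratic_eq_zero_iff_of_discrim_eq_zero ha hdisc] at hx hy
    rw [hx, hy]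
  · rintro ⟨s, hs, hdisc⟩
    have hroot := quadratic_eq_zero_iff ha (hdisc.trans (sq s))
    refine ⟨(-b + s) / (2 * a), (-b - s) / (2 * a), ?_, (hroot _).mpr (.inl rfl),
      (hroot _).mpr (.inr rfl)⟩
    rw [Ne, div_left_inj' (mul_ne_zero two_ne_zero ha)]
    intro h
    exact hs ((mul_eq_zero.mp (by linear_combination h : 2 * s = 0)).resolve_left two_ne_zero)

theorem Matrix.exists_ne_charpoly_roots_iff_discr_eq_sq {K : Type*} [Field K] [NeZero (2 : K)]
    (M : Matrix (Fin 2) (Fin 2) K) :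
    (∃ x y, x ≠ y ∧ M.charpoly.IsRoot x ∧ M.charpoly.IsRoot y) ↔
      ∃ s, s ≠ 0 ∧ M.discr = s ^ 2 := by
  have hroot (x : K) : M.charpoly.IsRoot x ↔ 1 * (x * x) + -M.trace * x + M.det = 0 := by
    rw [IsRoot, charpoly_fin_two]
    simp only [eval_add, eval_sub, eval_mul, eval_pow, eval_X, eval_C]
    ring_nf
  have hdiscr : M.discr = discrim 1 (-M.trace) M.det := by
    rw [discr_fin_two, discrim]; ring
  simp only [hroot, hdiscr]
  exact exists_ne_quadratic_roots_iff one_ne_zero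

theorem exists_ne_zero_sq_mul_eq_sq_iff {K : Type*} [Field K] {k : K} (hk : k ≠ 0) (x : K) :
    (∃ s, s ≠ 0 ∧ k ^ 2 * x = s ^ 2) ↔ ∃ s, s ≠ 0 ∧ x = s ^ 2 := by
  constructor
  · rintro ⟨s, hs, hx⟩
    refine ⟨s / k, div_ne_zero hs hk, ?_⟩
    rw [div_pow, ← hx]
    field_simp
  · rintro ⟨s, hs, rfl⟩
    exact ⟨k * s, mul_ne_zero hk hs, (mul_pow k s 2).symm⟩

theorem FiniteField.two_ne_zero_of_card_odd {F : Type*} [Field F] [Fintype F]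
    (hF : Fintype.card F % 2 = 1) : (2 : F) ≠ 0 :=
  Ring.two_ne_zero fun h => by
    have := FiniteField.even_card_iff_char_two.mp h
    omega

theorem discr_mul_of_sq_add_sq_eq_neg_one {K : Type*} [Field K] {ω σ τ : K} (hω : ω ≠ 0)
    (hτ : τ ≠ 0) (hστ : σ ^ 2 + τ ^ 2 = -1) :
    (!![0, ω; -1/ω, 0] * !![σ, τ; τ, -σ] : Matrix (Fin 2) (Fin 2) K).discr =
      (τ / ω) ^ 2 * (ω ^ 4 - (2 + 4 / τ ^ 2) * ω ^ 2 + 1) := by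
  have htrace : (!![0, ω; -1/ω, 0] * !![σ, τ; τ, -σ]).trace = ω * τ - τ / ω := by
    rw [mul_fin_two, trace_fin_two_of]; ring
  have hdet : (!![0, ω; -1/ω, 0] * !![σ, τ; τ, -σ]).det = 1 := by
    rw [det_mul, det_fin_two_of, det_fin_two_of]
    field_simp
    linear_combination -hστ
  rw [discr_fin_two, htrace, hdet]
  field_simp
  ring

theorem stmt_9_general (q : ℕ) (hq1 : q % 4 = 1)
    (F : Type) [Field F] [Fintype F] (hF : Fintype.card F = q)
    (ω σ τ : F) (hω : ω ≠ 0) (hτ : τ ≠ 0) (hστ : σ ^ 2 + τ ^ 2 = -1) :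
    (∃ a b : F, a ≠ b ∧
        ((!![0, ω; -1/ω, 0] * !![σ, τ; τ, -σ] : Matrix (Fin 2) (Fin 2) F)).charpoly.IsRoot a ∧
        ((!![0, ω; -1/ω, 0] * !![σ, τ; τ, -σ] : Matrix (Fin 2) (Fin 2) F)).charpoly.IsRoot b) ↔
      (∃ c : F, c ≠ 0 ∧ ω ^ 4 - (2 + 4 / τ ^ 2) * ω ^ 2 + 1 = c ^ 2) := by
  have : NeZero (2 : F) := ⟨FiniteField.two_ne_zero_of_card_odd (by omega)⟩
  rw [exists_ne_charpoly_roots_iff_discr_eq_sq, discr_mul_of_sq_add_sq_eq_neg_one hω hτ hστ,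
    exists_ne_zero_sq_mul_eq_sq_iff (div_ne_zero hτ hω)]

/-- For `q ≡ 1 (mod 4)`, with `t_ω = [[0,ω],[-1/ω,0]]` (`ω ≠ 0`) and
`s_{σ,τ} = [[σ,τ],[τ,-σ]]` (`σ,τ ≠ 0`, `σ² + τ² = -1`), the product `t_ω · s_{σ,τ}` has two
distinct eigenvalues if and only if `ω⁴ - (2 + 4/τ²)ω² + 1` is a nonzero square in `GF(q)`. -/
theorem stmt_9 (q : ℕ) (hq1 : q % 4 = 1) (hq3 : 3 < q)
    (F : Type) [Field F] [Fintype F] (hF : Fintype.card F = q)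
    (ι : F) (hι : ι ^ 2 = -1)
    (ω σ τ : F) (hω : ω ≠ 0) (hσ : σ ≠ 0) (hτ : τ ≠ 0) (hστ : σ ^ 2 + τ ^ 2 = -1) :
    (∃ a b : F, a ≠ b ∧
        ((!![0, ω; -1/ω, 0] * !![σ, τ; τ, -σ] : Matrix (Fin 2) (Fin 2) F)).charpoly.IsRoot a ∧
        ((!![0, ω; -1/ω, 0] * !![σ, τ; τ, -σ] : Matrix (Fin 2) (Fin 2) F)).charpoly.IsRoot b) ↔
      (∃ c : F, c ≠ 0 ∧ ω ^ 4 - (2 + 4 / τ ^ 2) * ω ^ 2 + 1 = c ^ 2) :=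
  stmt_9_general q hq1 F hF ω σ τ hω hτ hστ
end

section
/- Let f ∈ GF(q)[x] be a polynomial of degree 8 with no repeated roots in the algebraic closure of GF(q), q odd, such that f(x) is a square in GF(q) for every x ∈ GF(q). Then q ≤ 64. -/
/-!
Stepanov's method. Put `V = X ^ q - X` and `s = (q + 1) / 2`. Since every value of `f` is a
square, `f ^ s - f` vanishes on `F`, so `f ^ s - f = V * W`; by Frobenius and Taylor expansion,
`f ^ q - f = f.comp (X + V) - f = V * G` with `G = ∑ j, hasseDeriv (j + 1) f * V ^ j`. Comparing
`(f ^ s) ^ 2 = f ^ q * f` gives `V * W ^ 2 + 2 * f * W = f * G`, whose power series solution in `V`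
is `W = f * (√(1 + V * G / f) - 1) / V`. Let `Z` be its truncation at `V ^ 3`, scaled by
`128 * f ^ 3` to clear denominators. If `128 * f ^ 3 * W = Z`, then comparing `V`-adic digits
(all of degree `< q`) forces `rootCoeff₃ f ^ 2 = 2 ^ 14 * lc(f) * f ^ 7`, impossible for a
squarefree `f` of degree `8`. Otherwise `128 * f ^ 3 * W - Z` is a nonzero polynomial of degree
at most `3 q + 31` vanishing to order `4` at each of the at least `q - 8` points where `f ≠ 0`,
so `4 (q - 8) ≤ 3 q + 31`.
-/

open Polynomial

theorem Squarefree.isUnit_of_sq_eq_pow_mul {M : Type*} [CommMonoidWithZero M] [IsCancelMulZero M]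
    [DecompositionMonoid M] {a u : M} (ha : Squarefree a) (hu : IsUnit u) :
    ∀ (k : ℕ) {b : M}, b ^ 2 = a ^ (2 * k + 1) * u → IsUnit a := by
  by_cases ha0 : a = 0
  · exact fun _ _ _ ↦ ha a (by simp [ha0])
  intro k
  induction k with
  | zero =>
    intro b hb
    obtain ⟨c, rfl⟩ := (ha.dvd_pow_iff_dvd two_ne_zero).1 ⟨u, by simpa using hb⟩
    refine isUnit_of_dvd_unit ⟨c ^ 2, mul_left_cancel₀ ha0 ?_⟩ hu
    rw [← mul_assoc, ← sq, ← mul_pow]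
    simpa using hb.symm
  | succ k ih =>
    intro b hb
    obtain ⟨c, rfl⟩ := (ha.dvd_pow_iff_dvd two_ne_zero).1 ⟨a ^ (2 * k + 2) * u, by
      rw [hb, ← mul_assoc, ← pow_succ']; ring_nf⟩
    refine ih (b := c) (mul_left_cancel₀ (pow_ne_zero 2 ha0) ?_)
    rw [← mul_pow, hb, ← mul_assoc, ← pow_add]
    ring_nf

theorem mul_sq_add_two_mul_eq {R : Type*} [CommRing R] [IsDomain R] {f V W G : R} {s q : ℕ}
    (hs : 2 * s = q + 1) (hV : V ≠ 0) (hW : V * W = f ^ s - f) (hG : V * G = f ^ q - f) :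
    V * W ^ 2 + 2 * f * W = f * G := by
  refine mul_left_cancel₀ hV ?_
  have hsq : f ^ s * f ^ s = f ^ q * f := by rw [← pow_add, ← pow_succ]; congr 1; omega
  linear_combination (V * W + 2 * f + f ^ s - f) * hW - f * hG + hsq

namespace Polynomial

variable {R : Type*}

theorem natDegree_hasseDeriv_le_of_le [Semiring R] {f : R[X]} {n : ℕ} (hf : f.natDegree ≤ n)
    (j : ℕ) : (hasseDeriv j f).natDegree ≤ n - j :=
  (natDegree_hasseDeriv_le f j).trans (by omega)

theorem comp_X_add_eq_sum_hasseDeriv [CommSemiring R] (f g : R[X]) {n : ℕ}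
    (hn : f.natDegree < n) : f.comp (X + g) = ∑ j ∈ Finset.range n, hasseDeriv j f * g ^ j := by
  have hmap (j : ℕ) : hasseDeriv j (f.map C) = (hasseDeriv j f).map C := by
    ext; simp [hasseDeriv_coeff]
  calc f.comp (X + g) = (taylor X (f.map C)).eval g := by
        rw [taylor_eval, comp, ← eval_map, add_comm]
    _ = _ := by
        rw [eval_eq_sum_range' (by rwa [natDegree_taylor, natDegree_map_eq_of_injective C_injective])]
        simp_rw [taylor_coeff, hmap, eval_map, eval₂_C_X]

theorem comp_X_add_sub_self_eq_mul [CommRing R] (f g : R[X]) {n : ℕ} (hn : f.natDegree ≤ n) :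
    f.comp (X + g) - f = g * ∑ j ∈ Finset.range n, hasseDeriv (j + 1) f * g ^ j := by
  rw [comp_X_add_eq_sum_hasseDeriv f g (Nat.lt_succ_of_le hn), Finset.sum_range_succ',
    Finset.mul_sum]
  simp only [hasseDeriv_zero', pow_zero, mul_one, add_sub_cancel_right, pow_succ]
  exact Finset.sum_congr rfl fun j _ ↦ by ring

theorem eq_zero_of_add_mul_eq_zero_of_natDegree_lt [Ring R] [NoZeroDivisors R] {a b V : R[X]}
    (h : a + V * b = 0) (ha : a.natDegree < V.natDegree) : b = 0 := by
  by_contra hb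
  have hV : V ≠ 0 := by rintro rfl; simp at ha
  have := congrArg natDegree (eq_neg_of_add_eq_zero_left h)
  rw [natDegree_neg, natDegree_mul hV hb] at this
  omega

theorem mul_card_le_natDegree_of_pow_dvd [CommRing R] [IsDomain R] {p : R[X]} (hp : p ≠ 0)
    {S : Finset R} {k : ℕ} (h : ∀ a ∈ S, (X - C a) ^ k ∣ p) : k * S.card ≤ p.natDegree := by
  classical
  have hle : k • S.val ≤ p.roots := Multiset.le_iff_count.2 fun a ↦ by
    rw [Multiset.count_nsmul, count_roots]
    by_cases ha : a ∈ S
    · rw [Multiset.count_eq_one_of_mem S.nodup ha, mul_one]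
      exact (le_rootMultiplicity_iff hp).2 (h a ha)
    · simp [Multiset.count_eq_zero_of_notMem ha]
  simpa using (Multiset.card_le_card hle).trans (card_roots' p)

open Finset in
theorem card_le_card_filter_eval_ne_zero_add_natDegree [CommRing R] [IsDomain R] [Fintype R]
    [DecidableEq R] {p : R[X]} (hp : p ≠ 0) :
    Fintype.card R ≤ #{a | p.eval a ≠ 0} + p.natDegree := by
  have hroots : #{a | p.eval a = 0} ≤ p.natDegree :=
    card_le_degree_of_subset_roots fun a ha ↦ (mem_roots hp).2 (mem_filter.1 ha).2
  have := card_filter_add_card_filter_not (s := univ) (fun a ↦ p.eval a ≠ 0)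
  simp only [not_not, card_univ] at this
  omega

theorem X_sub_C_pow_dvd_of_dvd_mul {K : Type*} [Field K] {a : K} {k : ℕ} {p r : K[X]}
    (h : (X - C a) ^ k ∣ p * r) (hr : r.eval a ≠ 0) : (X - C a) ^ k ∣ p :=
  ((irreducible_X_sub_C a).coprime_iff_not_dvd.2 (by rwa [dvd_iff_isRoot])).pow_left
    |>.dvd_of_dvd_mul_right h

end Polynomial

namespace FiniteField

variable {K : Type*} [Field K] [Fintype K]

theorem X_pow_card_sub_X_dvd_of_forall_eval_eq_zero {p : K[X]} (hp : ∀ a, p.eval a = 0) :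
    X ^ Fintype.card K - X ∣ p := by
  by_cases hp0 : p = 0
  · simp [hp0]
  have hmonic : (X ^ Fintype.card K - X : K[X]).Monic :=
    monic_X_pow_sub (by rw [degree_X]; exact_mod_cast Fintype.one_lt_card)
  rw [← prod_multiset_X_sub_C_of_monic_of_roots_card_eq hmonic (by
      rw [roots_X_pow_card_sub_X, X_pow_card_sub_X_natDegree_eq K Fintype.one_lt_card]; rfl),
    roots_X_pow_card_sub_X, Multiset.prod_X_sub_C_dvd_iff_le_roots hp0,
    Multiset.le_iff_subset Finset.univ.nodup]
  exact fun a _ ↦ (mem_roots hp0).2 (hp a)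

theorem X_pow_card_sub_X_dvd_pow_sub_self {f : K[X]} (hsq : ∀ x, ∃ c, f.eval x = c ^ 2) {s : ℕ}
    (hs : 2 * s = Fintype.card K + 1) : X ^ Fintype.card K - X ∣ f ^ s - f :=
  X_pow_card_sub_X_dvd_of_forall_eval_eq_zero fun x ↦ by
    obtain ⟨c, hc⟩ := hsq x
    rw [eval_sub, eval_pow, hc, ← pow_mul, hs, pow_succ, pow_card, sq, sub_self]

theorem pow_card_sub_self_eq_mul (f : K[X]) {n : ℕ} (hn : f.natDegree ≤ n) :
    f ^ Fintype.card K - f = (X ^ Fintype.card K - X) *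
      ∑ j ∈ Finset.range n, hasseDeriv (j + 1) f * (X ^ Fintype.card K - X) ^ j := by
  rw [← comp_X_add_sub_self_eq_mul f _ hn, add_sub_cancel, ← expand_eq_comp_X_pow, expand_card]

theorem mul_card_le_natDegree_of_dvd_mul {e B : K[X]} (he : e ≠ 0) {k : ℕ}
    (h : (X ^ Fintype.card K - X) ^ k ∣ e * B) {S : Finset K} (hS : ∀ a ∈ S, B.eval a ≠ 0) :
    k * S.card ≤ e.natDegree :=
  mul_card_le_natDegree_of_pow_dvd he fun a ha ↦ X_sub_C_pow_dvd_of_dvd_mul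
    ((pow_dvd_pow_of_dvd (by simp [dvd_iff_isRoot, pow_card]) k).trans h) (hS a ha)

end FiniteField

namespace Stepanov

noncomputable section

variable {R : Type*} [CommRing R]

/-- `(f.comp (X + V) - f) / V` when `f.natDegree ≤ 8`. -/
def hasseQuot (f V : R[X]) : R[X] := ∑ j ∈ Finset.range 8, hasseDeriv (j + 1) f * V ^ j

def rootCoeff₁ (f : R[X]) : R[X] := 4 * f * hasseDeriv 2 f - derivative f ^ 2

def rootCoeff₂ (f : R[X]) : R[X] := 16 * f ^ 2 * hasseDeriv 3 f - 2 * derivative f * rootCoeff₁ f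

def rootCoeff₃ (f : R[X]) : R[X] :=
  64 * f ^ 3 * hasseDeriv 4 f - rootCoeff₁ f ^ 2 - 2 * derivative f * rootCoeff₂ f

/-- `128 * f ^ 3` times the truncation at `V ^ 3` of the power series
`W = f * (√(1 + V * G / f) - 1) / V` solving `V * W ^ 2 + 2 * f * W = f * G`, `G = hasseQuot f V`. -/
def approxRoot (f V : R[X]) : R[X] :=
  64 * f ^ 3 * derivative f + 16 * f ^ 2 * rootCoeff₁ f * V + 4 * f * rootCoeff₂ f * V ^ 2 +
    rootCoeff₃ f * V ^ 3

def defectLow (f V : R[X]) : R[X] :=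
  (128 * (derivative f * rootCoeff₃ f + rootCoeff₁ f * rootCoeff₂ f) * f ^ 3 -
      16384 * f ^ 7 * hasseDeriv 5 f) +
    ((32 * rootCoeff₁ f * rootCoeff₃ f + 16 * rootCoeff₂ f ^ 2) * f ^ 2 -
      16384 * f ^ 7 * hasseDeriv 6 f) * V +
    (8 * rootCoeff₂ f * rootCoeff₃ f * f - 16384 * f ^ 7 * hasseDeriv 7 f) * V ^ 2

def defectTop (f : R[X]) : R[X] := rootCoeff₃ f ^ 2 - 16384 * f ^ 7 * hasseDeriv 8 f

theorem approxRoot_defect (f V : R[X]) :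
    V * approxRoot f V ^ 2 + 256 * f ^ 4 * approxRoot f V - 16384 * f ^ 7 * hasseQuot f V =
      V ^ 4 * (defectLow f V + V ^ 3 * defectTop f) := by
  simp only [approxRoot, defectLow, defectTop, rootCoeff₃, rootCoeff₂, rootCoeff₁, hasseQuot,
    Finset.sum_range_succ, Finset.sum_range_zero, zero_add, hasseDeriv_one']
  ring

theorem approxRoot_gap {f V W : R[X]} (hW : V * W ^ 2 + 2 * f * W = f * hasseQuot f V) :
    (128 * f ^ 3 * W - approxRoot f V) * (V * (128 * f ^ 3 * W + approxRoot f V) + 256 * f ^ 4) =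
      -(V ^ 4 * (defectLow f V + V ^ 3 * defectTop f)) := by
  linear_combination 16384 * f ^ 6 * hW - approxRoot_defect f V

variable {f : R[X]}

theorem natDegree_rootCoeff₁_le (hf : f.natDegree ≤ 8) : (rootCoeff₁ f).natDegree ≤ 14 := by
  have h₁ : (derivative f).natDegree ≤ 7 := (natDegree_derivative_le f).trans (by omega)
  have h₂ := natDegree_hasseDeriv_le_of_le hf 2
  unfold rootCoeff₁
  compute_degree
  all_goals omega

theorem natDegree_rootCoeff₂_le (hf : f.natDegree ≤ 8) : (rootCoeff₂ f).natDegree ≤ 21 := by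
  have h₁ : (derivative f).natDegree ≤ 7 := (natDegree_derivative_le f).trans (by omega)
  have h₃ := natDegree_hasseDeriv_le_of_le hf 3
  have d₁ := natDegree_rootCoeff₁_le hf
  unfold rootCoeff₂
  compute_degree
  all_goals omega

theorem natDegree_rootCoeff₃_le (hf : f.natDegree ≤ 8) : (rootCoeff₃ f).natDegree ≤ 28 := by
  have h₁ : (derivative f).natDegree ≤ 7 := (natDegree_derivative_le f).trans (by omega)
  have h₄ := natDegree_hasseDeriv_le_of_le hf 4
  have d₁ := natDegree_rootCoeff₁_le hf
  have d₂ := natDegree_rootCoeff₂_le hf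
  unfold rootCoeff₃
  compute_degree
  all_goals omega

theorem natDegree_approxRoot_le (hf : f.natDegree ≤ 8) (V : R[X]) :
    (approxRoot f V).natDegree ≤ 3 * V.natDegree + 31 := by
  have h₁ : (derivative f).natDegree ≤ 7 := (natDegree_derivative_le f).trans (by omega)
  have d₁ := natDegree_rootCoeff₁_le hf
  have d₂ := natDegree_rootCoeff₂_le hf
  have d₃ := natDegree_rootCoeff₃_le hf
  unfold approxRoot
  compute_degree
  all_goals omega

theorem natDegree_defectLow_le (hf : f.natDegree ≤ 8) (V : R[X]) :
    (defectLow f V).natDegree ≤ 2 * V.natDegree + 59 := by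
  have h₁ : (derivative f).natDegree ≤ 7 := (natDegree_derivative_le f).trans (by omega)
  have h₅ := natDegree_hasseDeriv_le_of_le hf 5
  have h₆ := natDegree_hasseDeriv_le_of_le hf 6
  have h₇ := natDegree_hasseDeriv_le_of_le hf 7
  have d₁ := natDegree_rootCoeff₁_le hf
  have d₂ := natDegree_rootCoeff₂_le hf
  have d₃ := natDegree_rootCoeff₃_le hf
  unfold defectLow
  compute_degree
  all_goals omega

theorem exists_mul_sq_add_two_mul_eq {F : Type*} [Field F] [Fintype F] {f : F[X]}
    (hf : f.natDegree ≤ 8) (hq : Odd (Fintype.card F)) (hsq : ∀ x, ∃ c, f.eval x = c ^ 2) :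
    ∃ W : F[X], (X ^ Fintype.card F - X) * W ^ 2 + 2 * f * W =
        f * hasseQuot f (X ^ Fintype.card F - X) ∧ W.natDegree ≤ 3 * Fintype.card F + 4 := by
  obtain ⟨s, hs⟩ : ∃ s, 2 * s = Fintype.card F + 1 := ⟨(Fintype.card F + 1) / 2, by
    obtain ⟨t, ht⟩ := hq; omega⟩
  have hV0 : (X ^ Fintype.card F - X : F[X]) ≠ 0 :=
    FiniteField.X_pow_card_sub_X_ne_zero F Fintype.one_lt_card
  obtain ⟨W, hW⟩ := FiniteField.X_pow_card_sub_X_dvd_pow_sub_self hsq hs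
  refine ⟨W, mul_sq_add_two_mul_eq hs hV0 hW.symm (FiniteField.pow_card_sub_self_eq_mul f hf).symm,
    ?_⟩
  rcases eq_or_ne W 0 with rfl | hW0
  · simp
  have hVW := congrArg natDegree hW
  rw [natDegree_mul hV0 hW0, FiniteField.X_pow_card_sub_X_natDegree_eq F Fintype.one_lt_card]
    at hVW
  have : (f ^ s - f).natDegree ≤ s * 8 :=
    (natDegree_sub_le _ _).trans (max_le (natDegree_pow_le_of_le s hf) (by omega))
  omega

theorem mul_ne_approxRoot {K : Type*} [Field K] {f V W : K[X]} (hsf : Squarefree f)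
    (hf : f.natDegree = 8) (h2 : (2 : K) ≠ 0) (hV : 60 ≤ V.natDegree)
    (hW : V * W ^ 2 + 2 * f * W = f * hasseQuot f V) : 128 * f ^ 3 * W ≠ approxRoot f V := by
  intro he
  have hV0 : V ≠ 0 := by rintro rfl; simp at hV
  have hdefect : defectLow f V + V ^ 3 * defectTop f = 0 := by
    have := approxRoot_gap hW
    rwa [he, sub_self, zero_mul, zero_eq_neg, mul_eq_zero, or_iff_right (pow_ne_zero 4 hV0)] at this
  have htop : defectTop f = 0 := eq_zero_of_add_mul_eq_zero_of_natDegree_lt hdefect <| by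
    have := natDegree_defectLow_le hf.le V
    rw [natDegree_pow]
    omega
  have hunit : IsUnit (C (2 ^ 14 * f.leadingCoeff)) :=
    isUnit_C.2 (isUnit_iff_ne_zero.2 (mul_ne_zero (pow_ne_zero _ h2) (leadingCoeff_ne_zero.2
      (by rintro rfl; simp at hf))))
  have hsq : rootCoeff₃ f ^ 2 = f ^ (2 * 3 + 1) * C (2 ^ 14 * f.leadingCoeff) := by
    rw [← sub_eq_zero, ← htop, defectTop, ← hf, hasseDeriv_natDegree_eq_C]
    simp only [map_mul, map_pow, C_ofNat]
    ring
  have := natDegree_eq_zero_of_isUnit (hsf.isUnit_of_sq_eq_pow_mul hunit 3 hsq)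
  omega

open Finset in
theorem card_le_of_mul_ne_approxRoot {F : Type*} [Field F] [Fintype F] [DecidableEq F]
    {f W : F[X]} (hf : f.natDegree = 8) (h2 : (2 : F) ≠ 0)
    (hW : (X ^ Fintype.card F - X) * W ^ 2 + 2 * f * W =
      f * hasseQuot f (X ^ Fintype.card F - X))
    (hWdeg : W.natDegree ≤ 3 * Fintype.card F + 4)
    (hne : 128 * f ^ 3 * W ≠ approxRoot f (X ^ Fintype.card F - X)) :
    Fintype.card F ≤ 63 := by
  set V : F[X] := X ^ Fintype.card F - X with hV
  set e := 128 * f ^ 3 * W - approxRoot f V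
  have hVdeg : V.natDegree = Fintype.card F :=
    FiniteField.X_pow_card_sub_X_natDegree_eq F Fintype.one_lt_card
  have hf0 : f ≠ 0 := by rintro rfl; simp at hf
  have hcount : 4 * #{a | f.eval a ≠ 0} ≤ e.natDegree := by
    refine FiniteField.mul_card_le_natDegree_of_dvd_mul (sub_ne_zero.2 hne)
      ⟨-(defectLow f V + V ^ 3 * defectTop f), by rw [approxRoot_gap hW, neg_mul_eq_mul_neg]⟩
      fun a ha ↦ ?_
    have hVa : V.eval a = 0 := by simp [hV, FiniteField.pow_card]
    have h256 : (256 : F) = 2 ^ 8 := by norm_num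
    simpa [hVa, h256, h2] using (mem_filter.1 ha).2
  have hedeg : e.natDegree ≤ 3 * Fintype.card F + 31 := by
    have := natDegree_approxRoot_le hf.le V
    simp only [e]
    compute_degree
    all_goals omega
  have := card_le_card_filter_eval_ne_zero_add_natDegree hf0
  omega

end

end Stepanov

/-- (Consequence of the Weil bound.) If `f ∈ GF(q)[x]`, `q` odd, has degree `8`, has no repeated
roots in the algebraic closure, and `f(x)` is a square in `GF(q)` for every `x ∈ GF(q)`,
then `q ≤ 64`. -/
theorem stmt_12 (q : ℕ) (hq : Odd q)
    (F : Type) [Field F] [Fintype F] (hF : Fintype.card F = q)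
    (f : F[X]) (hdeg : f.natDegree = 8)
    (hsep : (f.map (algebraMap F (AlgebraicClosure F))).roots.Nodup)
    (hsq : ∀ x : F, ∃ c : F, f.eval x = c ^ 2) :
    q ≤ 64 := by
  classical
  subst hF
  have hf0 : f ≠ 0 := by rintro rfl; simp at hdeg
  have hsf : Squarefree f :=
    ((nodup_aroots_iff_of_splits hf0 (IsAlgClosed.splits _)).1 hsep).squarefree
  have h2 : (2 : F) ≠ 0 := Ring.two_ne_zero fun h ↦ by
    have := FiniteField.even_card_iff_char_two.1 h
    have := Nat.odd_iff.1 hq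
    omega
  obtain ⟨W, hW, hWdeg⟩ := Stepanov.exists_mul_sq_add_two_mul_eq hdeg.le hq hsq
  by_contra! hq64
  have hne := Stepanov.mul_ne_approxRoot hsf hdeg h2 (by
    rw [FiniteField.X_pow_card_sub_X_natDegree_eq F Fintype.one_lt_card]; omega) hW
  have := Stepanov.card_le_of_mul_ne_approxRoot hdeg h2 hW hWdeg hne
  omega
end

section
/- Let q be an odd prime power, λ ∈ GF(q) with λ ≠ 0, ±1, and (σ₀,τ₀) ∈ GF(q)² with σ₀² + τ₀² = -1, where -1 is a non-square in GF(q) (i.e. q ≡ 3 mod 4). Then the polynomial θ(ζ) = (λ² + λ⁻² - 2)(τ₀ + 2σ₀ζ - τ₀ζ²)² - 4(ζ²+1)² ∈ GF(q)[ζ] is separable (has no repeated roots in the algebraic closure). -/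
open Polynomial

/-- For `q ≡ 3 (mod 4)` (so `-1` is a non-square in `GF(q)`), `λ ≠ 0, ±1`, and
`σ₀² + τ₀² = -1`, the polynomial
`θ(ζ) = (λ² + λ⁻² - 2)(τ₀ + 2σ₀ζ - τ₀ζ²)² - 4(ζ²+1)²` is separable. -/
theorem stmt_17 (q : ℕ) (hq : Odd q)
    (F : Type) [Field F] [Fintype F] (hF : Fintype.card F = q)
    (hns : ¬ IsSquare (-1 : F))
    (l σ₀ τ₀ : F) (hl : l ≠ 0) (hl1 : l ≠ 1) (hl1' : l ≠ -1)
    (h0 : σ₀ ^ 2 + τ₀ ^ 2 = -1) :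
    (C (l ^ 2 + l⁻¹ ^ 2 - 2) * (C τ₀ + C (2 * σ₀) * X - C τ₀ * X ^ 2) ^ 2 -
        4 * (X ^ 2 + 1) ^ 2 : F[X]).Separable := by
  -- characteristic is not 2
  have h2F : (2 : F) ≠ 0 := by
    intro h
    exact hns ⟨1, by linear_combination -h⟩
  have hlinv : l * l⁻¹ = 1 := mul_inv_cancel₀ hl
  have hc : l - l⁻¹ ≠ 0 := by
    intro h
    have h' : (l - 1) * (l + 1) = 0 := by linear_combination l * h + hlinv
    rcases mul_eq_zero.mp h' with h'' | h''
    · exact hl1 (by linear_combination h'')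
    · exact hl1' (by linear_combination h'')
  have hder : derivative (C (l ^ 2 + l⁻¹ ^ 2 - 2) * (C τ₀ + C (2 * σ₀) * X - C τ₀ * X ^ 2) ^ 2 -
        4 * (X ^ 2 + 1) ^ 2 : F[X]) =
      C (l ^ 2 + l⁻¹ ^ 2 - 2) *
        (2 * (C τ₀ + C (2 * σ₀) * X - C τ₀ * X ^ 2) * (C (2 * σ₀) - 2 * C τ₀ * X)) -
      16 * X * (X ^ 2 + 1) := by
    simp [derivative_sub, derivative_mul, derivative_pow, map_ofNat]
    ring
  rw [Polynomial.separable_def]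
  rw [Polynomial.isCoprime_iff_aeval_ne_zero_of_isAlgClosed F (AlgebraicClosure F) _ _]
  intro a
  by_contra hcon
  push_neg at hcon
  obtain ⟨h1, h2⟩ := hcon
  rw [hder] at h2
  set φ := algebraMap F (AlgebraicClosure F) with hφ
  have hinj : Function.Injective φ := RingHom.injective φ
  set L := φ l with hL
  set M := φ l⁻¹ with hM
  set S := φ σ₀ with hS
  set T := φ τ₀ with hT
  have hLM : L * M = 1 := by rw [hL, hM, ← map_mul, hlinv, map_one]
  have hST : S ^ 2 + T ^ 2 = -1 := by
    rw [hS, hT, ← map_pow, ← map_pow, ← map_add, h0, map_neg, map_one]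
  have h2K : (2 : AlgebraicClosure F) ≠ 0 := by
    intro h
    apply h2F
    apply hinj
    rw [map_ofNat, map_zero]
    exact h
  have hcne : L - M ≠ 0 := by
    intro h
    apply hc
    apply hinj
    rw [map_sub, map_zero]
    exact h
  have h2σ : φ (2 * σ₀) = 2 * S := by rw [map_mul, map_ofNat]
  simp only [map_sub, map_mul, map_add, map_pow, aeval_C, aeval_X, map_ofNat, map_one,
    ← hφ, ← hL, ← hM, ← hS, ← hT, h2σ] at h1 h2
  -- h1 : (L^2+M^2-2) * (T + 2S a - T a^2)^2 - 4 (a^2+1)^2 = 0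
  -- h2 : (L^2+M^2-2) * (2 (T + 2S a - T a^2) (2S - 2T a)) - 16 a (a^2+1) = 0
  have hfac : ((L - M) * (T + 2 * S * a - T * a ^ 2) - 2 * (a ^ 2 + 1)) *
      ((L - M) * (T + 2 * S * a - T * a ^ 2) + 2 * (a ^ 2 + 1)) = 0 := by
    linear_combination h1 - 2 * (T + 2 * S * a - T * a ^ 2) ^ 2 * hLM
  obtain ⟨d, hd2, hdp⟩ : ∃ d : AlgebraicClosure F, d ^ 2 = (L - M) ^ 2 ∧
      d * (T + 2 * S * a - T * a ^ 2) = 2 * (a ^ 2 + 1) := by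
    rcases mul_eq_zero.mp hfac with h | h
    · exact ⟨L - M, rfl, by linear_combination h⟩
    · exact ⟨-(L - M), by ring, by linear_combination -h⟩
  have hdne : d ≠ 0 := by
    intro h
    apply hcne
    have h' : (L - M) ^ 2 = 0 := by rw [← hd2, h]; ring
    exact pow_eq_zero_iff (two_ne_zero) |>.mp h'
  have h4Kne : (4 : AlgebraicClosure F) ≠ 0 := fun hh =>
    h2K (mul_self_eq_zero.mp (by linear_combination hh))
  have hkey : (4 * (a ^ 2 + 1)) * (d * (2 * S - 2 * T * a) - 4 * a) = 0 := by
    linear_combination (-(2 * d * (2 * S - 2 * T * a))) * hdp + h2 +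
      (2 * (T + 2 * S * a - T * a ^ 2) * (2 * S - 2 * T * a)) * hd2 -
      4 * (T + 2 * S * a - T * a ^ 2) * (2 * S - 2 * T * a) * hLM
  rcases mul_eq_zero.mp hkey with hs0 | hdp'
  · -- repeated root would satisfy a² = -1
    have hs0' : a ^ 2 + 1 = 0 := by
      rcases mul_eq_zero.mp hs0 with h | h
      · exact absurd h h4Kne
      · exact h
    have hp0 : T + 2 * S * a - T * a ^ 2 = 0 := by
      have h' : d * (T + 2 * S * a - T * a ^ 2) = 0 := by rw [hdp, hs0']; ring
      exact (mul_eq_zero.mp h').resolve_left hdne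
    have haux2 : 2 * T + 2 * S * a = 0 := by
      linear_combination hp0 + T * hs0'
    have hsum4 : 4 * S ^ 2 + 4 * T ^ 2 = 0 := by
      linear_combination (2 * T - 2 * S * a) * haux2 + 4 * S ^ 2 * hs0'
    exact h4Kne (by linear_combination 4 * hST - hsum4)
  · have eq1 : d * T + 2 * (d * S) * a - (d * T) * a ^ 2 = 2 * (a ^ 2 + 1) := by
      linear_combination hdp
    have eq2' : 2 * (d * S) - 2 * (d * T) * a - 4 * a = 0 := by
      linear_combination hdp'
    have hv : (d * T) * (a ^ 2 + 1) = 2 - 2 * a ^ 2 := by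
      linear_combination eq1 - a * eq2'
    have hu2 : 2 * ((d * S) * (a ^ 2 + 1)) = 8 * a := by
      linear_combination (a ^ 2 + 1) * eq2' + 2 * a * hv
    have hsum' : (d * S) ^ 2 + (d * T) ^ 2 + d ^ 2 = 0 := by
      linear_combination d ^ 2 * hST
    have h4 : (4 * d ^ 2 + 16) * (a ^ 2 + 1) ^ 2 = 0 := by
      linear_combination 4 * (a ^ 2 + 1) ^ 2 * hsum' -
        (2 * (d * S) * (a ^ 2 + 1) + 8 * a) * hu2 -
        4 * ((d * T) * (a ^ 2 + 1) + 2 - 2 * a ^ 2) * hv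
    have h8ne : (8 : AlgebraicClosure F) ≠ 0 := by
      intro hh
      have h1' : (2 : AlgebraicClosure F) * (2 * 2) = 0 := by linear_combination hh
      rcases mul_eq_zero.mp h1' with h' | h'
      · exact h2K h'
      · exact h2K (mul_self_eq_zero.mp h')
    have hsne : a ^ 2 + 1 ≠ 0 := by
      intro h
      have h8a : (8 : AlgebraicClosure F) * a = 0 := by
        rw [← hu2, h, mul_zero, mul_zero]
      have ha : a = 0 := (mul_eq_zero.mp h8a).resolve_left h8ne
      rw [ha] at h
      exact one_ne_zero (α := AlgebraicClosure F) (by linear_combination h)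
    have hd4 : 4 * d ^ 2 + 16 = 0 :=
      (mul_eq_zero.mp h4).resolve_right (pow_ne_zero 2 hsne)
    have hK2 : 4 * (L - M) ^ 2 + 16 = 0 := by linear_combination hd4 - 4 * hd2
    have hF4' : 4 * (l - l⁻¹) ^ 2 + 16 = 0 := by
      apply hinj
      rw [map_add, map_mul, map_pow, map_sub, map_ofNat, map_ofNat, map_zero]
      exact hK2
    have h4F : (4 : F) ≠ 0 := fun hh =>
      h2F (mul_self_eq_zero.mp (by linear_combination hh))
    have c2 : (l - l⁻¹) ^ 2 = -4 := by
      apply mul_left_cancel₀ h4F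
      linear_combination hF4'
    have hsq : ((l - l⁻¹) / 2) * ((l - l⁻¹) / 2) = -1 := by
      rw [div_mul_div_comm, div_eq_iff (mul_ne_zero h2F h2F)]
      linear_combination c2
    exact hns ⟨(l - l⁻¹) / 2, hsq.symm⟩
end

section
/- Let q ≡ 3 (mod 4) be a prime power and λ ∈ GF(q) with λ ≠ 0, ±1. Then the quartic equation (λ² + λ⁻² + 2)ω⁴ + 2(λ² + λ⁻² - 6)ω² + (λ² + λ⁻² + 2) = 0 has no solution ω ∈ GF(q). -/
/-- For `q ≡ 3 (mod 4)` a prime power and `λ ∈ GF(q)` with `λ ≠ 0, ±1`, the quartic equation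
`(λ² + λ⁻² + 2)ω⁴ + 2(λ² + λ⁻² - 6)ω² + (λ² + λ⁻² + 2) = 0` has no solution `ω ∈ GF(q)`. -/
theorem stmt_18 (q : ℕ) (hq1 : q % 4 = 3)
    (F : Type) [Field F] [Fintype F] (hF : Fintype.card F = q)
    (l : F) (hl : l ≠ 0) (hl1 : l ≠ 1) (hl1' : l ≠ -1) :
    ∀ ω : F, (l ^ 2 + l⁻¹ ^ 2 + 2) * ω ^ 4 + 2 * (l ^ 2 + l⁻¹ ^ 2 - 6) * ω ^ 2 +
      (l ^ 2 + l⁻¹ ^ 2 + 2) ≠ 0 := by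
  intro ω h
  have hneg : ¬ IsSquare (-1 : F) := by
    simp [FiniteField.isSquare_neg_one_iff, hF, hq1]
  have h2 : (2 : F) ≠ 0 := by
    intro h0
    exact hneg ⟨1, by linear_combination -h0⟩
  have hinv : l * l⁻¹ = 1 := mul_inv_cancel₀ hl
  have hd : l - l⁻¹ ≠ 0 := by
    intro h0
    have hz : (l - 1) * (l + 1) = 0 := by linear_combination l * h0 + hinv
    rcases mul_eq_zero.1 hz with h' | h'
    · exact hl1 (by linear_combination h')
    · exact hl1' (by linear_combination h')
  have h4 : (4 : F) * (l - l⁻¹) ≠ 0 := by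
    refine mul_ne_zero (fun h0 => h2 ?_) hd
    have : (2 : F) * 2 = 0 := by linear_combination h0
    exact mul_self_eq_zero.1 this
  set A : F := l ^ 2 + l⁻¹ ^ 2 + 2 with hA
  have key : (A * ω ^ 2 + A - 8) ^ 2 = -((4 : F) * (l - l⁻¹)) ^ 2 := by
    linear_combination A * h - 32 * hinv
  refine hneg ⟨(A * ω ^ 2 + A - 8) * ((4 : F) * (l - l⁻¹))⁻¹, ?_⟩
  have hinv4 : ((4 : F) * (l - l⁻¹)) * ((4 : F) * (l - l⁻¹))⁻¹ = 1 := mul_inv_cancel₀ h4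
  linear_combination (-(((4:F)*(l-l⁻¹))⁻¹)^2) * key +
    (((4:F)*(l-l⁻¹)) * ((4:F)*(l-l⁻¹))⁻¹ + 1) * hinv4
end
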